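/- arXiv:0903.3220 — 11 statements merged into one kernel-verified Lean document; each statement's English description precedes it below -/
import Mathlib

section
/- Let W₁ be a polynomial in the variables x₁,…,x_r over ℂ and W₂ a polynomial in the disjoint variables y₁,…,y_s over ℂ, and let W = W₁ + W₂, viewed as a polynomial in all r+s variables. Then there is an isomorphism of ℂ-algebras ℂ[x₁,…,x_r,y₁,…,y_s]/J(W) ≅ (ℂ[x₁,…,x_r]/J(W₁)) ⊗_ℂ (ℂ[y₁,…,y_s]/J(W₂)), where J(f) denotes the Jacobian ideal of f, i.e. the ideal generated by all first-order partial derivatives of f. -/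
/-!
Under `ℂ[x] ⊗ ℂ[y] ≅ ℂ[x, y]` the partial derivatives of `W₁(x) + W₂(y)` are those of `W₁` in the
`x`-variables and those of `W₂` in the `y`-variables, so `J(W₁ + W₂)` corresponds to
`J(W₁) ⊗ 1 + 1 ⊗ J(W₂)`. The quotient of `A ⊗ B` by `I ⊗ 1 + 1 ⊗ J` is `A/I ⊗ B/J`: it is the
kernel of the surjection `A ⊗ B → A/I ⊗ B/J`, by right exactness of the tensor product.
-/

open MvPolynomial TensorProduct

namespace Algebra.TensorProduct

variable {R A B : Type*} [CommRing R] [CommRing A] [CommRing B] [Algebra R A] [Algebra R B]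

noncomputable def quotientSupMapEquivTensorQuotient (I : Ideal A) (J : Ideal B) :
    (A ⊗[R] B ⧸ (I.map (includeLeft : A →ₐ[R] A ⊗[R] B) ⊔ J.map includeRight)) ≃ₐ[R]
      (A ⧸ I) ⊗[R] (B ⧸ J) :=
  (Ideal.quotientEquivAlgOfEq R <| by
      rw [map_ker _ _ (Ideal.Quotient.mkₐ_surjective R I) (Ideal.Quotient.mkₐ_surjective R J),
        ← RingHom.ker_coe_toRingHom, Ideal.Quotient.mkₐ_ker, ← RingHom.ker_coe_toRingHom,
        Ideal.Quotient.mkₐ_ker]).trans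
    (Ideal.quotientKerAlgEquivOfSurjective <|
      map_surjective _ _ (Ideal.Quotient.mkₐ_surjective R I) (Ideal.Quotient.mkₐ_surjective R J))

end Algebra.TensorProduct

namespace MvPolynomial

open Algebra.TensorProduct

variable {R σ τ : Type*}

section CommSemiring

variable [CommSemiring R]

noncomputable def jacobianIdeal (f : MvPolynomial σ R) : Ideal (MvPolynomial σ R) :=
  Ideal.span (Set.range fun i => pderiv i f)

lemma pderiv_rename_of_notMem_range {f : σ → τ} {i : τ} (h : i ∉ Set.range f)
    (p : MvPolynomial σ R) : pderiv i (rename f p) = 0 := by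
  classical
  refine pderiv_eq_zero_of_notMem_vars fun hi => h ?_
  obtain ⟨j, -, rfl⟩ := Finset.mem_image.mp (vars_rename f p hi)
  exact ⟨j, rfl⟩

lemma jacobianIdeal_rename_inl_add_rename_inr (W₁ : MvPolynomial σ R) (W₂ : MvPolynomial τ R) :
    jacobianIdeal (rename Sum.inl W₁ + rename Sum.inr W₂) =
      (jacobianIdeal W₁).map (rename Sum.inl) ⊔ (jacobianIdeal W₂).map (rename Sum.inr) := by
  have hpderiv : (fun i => pderiv i (rename Sum.inl W₁ + rename Sum.inr W₂)) =
      Sum.elim (rename Sum.inl ∘ fun i => pderiv i W₁)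
        (rename Sum.inr ∘ fun j => pderiv j W₂) := by
    ext1 (i | j)
    · simp [pderiv_rename Sum.inl_injective, pderiv_rename_of_notMem_range]
    · simp [pderiv_rename Sum.inr_injective, pderiv_rename_of_notMem_range]
  rw [jacobianIdeal, hpderiv, Set.Sum.elim_range, Ideal.span_union, Set.range_comp,
    Set.range_comp, ← Ideal.map_span, ← Ideal.map_span]
  rfl

lemma tensorEquivSum_comp_includeLeft :
    (tensorEquivSum R σ τ R).toAlgHom.comp includeLeft = rename Sum.inl := by
  ext i; simp

lemma tensorEquivSum_comp_includeRight :
    (tensorEquivSum R σ τ R).toAlgHom.comp includeRight = rename Sum.inr := by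
  ext i; simp

lemma map_tensorEquivSum_sup (I : Ideal (MvPolynomial σ R)) (J : Ideal (MvPolynomial τ R)) :
    (I.map (includeLeft : _ →ₐ[R] MvPolynomial σ R ⊗[R] MvPolynomial τ R) ⊔
        J.map includeRight).map (tensorEquivSum R σ τ R : _ →+* MvPolynomial (σ ⊕ τ) R) =
      I.map (rename Sum.inl) ⊔ J.map (rename Sum.inr) := by
  rw [Ideal.map_sup]
  congr 1
  · rw [← tensorEquivSum_comp_includeLeft, ← Ideal.map_mapₐ]; rfl
  · rw [← tensorEquivSum_comp_includeRight, ← Ideal.map_mapₐ]; rfl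

end CommSemiring

abbrev MilnorRing [CommRing R] (f : MvPolynomial σ R) := MvPolynomial σ R ⧸ jacobianIdeal f

noncomputable def MilnorRing.sumEquiv [CommRing R] (W₁ : MvPolynomial σ R)
    (W₂ : MvPolynomial τ R) :
    MilnorRing (rename Sum.inl W₁ + rename Sum.inr W₂) ≃ₐ[R] MilnorRing W₁ ⊗[R] MilnorRing W₂ :=
  (Ideal.quotientEquivAlg _ _ (tensorEquivSum R σ τ R) <| by
      rw [map_tensorEquivSum_sup, jacobianIdeal_rename_inl_add_rename_inr]).symm.trans
    (quotientSupMapEquivTensorQuotient _ _)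

end MvPolynomial

/-- The Milnor ring of a sum of singularities in disjoint variables is the
tensor product of the Milnor rings: `ℂ[x,y]/J(W₁+W₂) ≅ ℂ[x]/J(W₁) ⊗ ℂ[y]/J(W₂)`. -/
theorem milnor_ring_of_sum_of_singularities (r s : ℕ)
    (W₁ : MvPolynomial (Fin r) ℂ) (W₂ : MvPolynomial (Fin s) ℂ) :
    Nonempty
      ((MvPolynomial (Fin r ⊕ Fin s) ℂ ⧸
          (Ideal.span (Set.range fun i : Fin r ⊕ Fin s =>
            pderiv i (rename Sum.inl W₁ + rename Sum.inr W₂)) :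
            Ideal (MvPolynomial (Fin r ⊕ Fin s) ℂ)))
        ≃ₐ[ℂ]
       TensorProduct ℂ
        (MvPolynomial (Fin r) ℂ ⧸
          (Ideal.span (Set.range fun i : Fin r => pderiv i W₁) :
            Ideal (MvPolynomial (Fin r) ℂ)))
        (MvPolynomial (Fin s) ℂ ⧸
          (Ideal.span (Set.range fun i : Fin s => pderiv i W₂) :
            Ideal (MvPolynomial (Fin s) ℂ)))) :=
  ⟨MilnorRing.sumEquiv W₁ W₂⟩
end

section
/- The quotient ring ℂ[X,Y]/(3X²Y, X³ + 7Y⁶) is a finite-dimensional ℂ-vector space of dimension 15. -/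
/-!
In any algebra generated by `x, y` with `x²y = 0` and `x³ = -c yᵐ` (`c ≠ 0`) one also has
`c yᵐ⁺¹ = y (x³ + c yᵐ) - x (x²y) = 0`, and these three rules reduce every monomial to a multiple
of some `xᵃyᵇ` with `a ≤ 1, b ≤ m`, or of `x²`: these `2m + 3` monomials span. In the quotient
`K[x, y]/(x²y, x³ + c yᵐ)` they are independent, because reading off the coefficient of `xᵃyᵇ`
after the substitution `xᵃ⁺³ ↦ -c xᵃyᵐ` gives linear functionals that vanish on the ideal.
The theorem is the case `c = 7`, `m = 6`, the unit `3` being irrelevant for the ideal.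
-/

open MvPolynomial Finset

theorem Submodule.span_eq_top_of_mul_mem {R A : Type*} [CommSemiring R] [Semiring A]
    [Algebra R A] {s t : Set A} (hs : Algebra.adjoin R s = ⊤) (h1 : 1 ∈ span R t)
    (hmul : ∀ a ∈ s, ∀ b ∈ t, a * b ∈ span R t) : span R t = ⊤ := by
  have hstable : ∀ a ∈ s, ∀ w ∈ span R t, a * w ∈ span R t := fun a ha =>
    span_le (p := (span R t).comap (LinearMap.mulLeft R a)) |>.mpr (hmul a ha)
  rw [eq_top_iff]; rintro z -
  have hz : z ∈ Algebra.adjoin R s := hs ▸ Algebra.mem_top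
  suffices ∀ w ∈ span R t, z * w ∈ span R t by simpa using this 1 h1
  induction hz using Algebra.adjoin_induction with
  | mem a ha => exact hstable a ha
  | algebraMap r => intro w hw; rw [← Algebra.smul_def]; exact smul_mem _ r hw
  | add a b _ _ ha hb => intro w hw; rw [add_mul]; exact add_mem (ha w hw) (hb w hw)
  | mul a b _ _ ha hb => intro w hw; rw [mul_assoc]; exact ha _ (hb w hw)

def chainExponents (m : ℕ) : Finset (ℕ × ℕ) := insert (2, 0) (range 2 ×ˢ range (m + 1))

theorem mem_chainExponents {m : ℕ} {p : ℕ × ℕ} :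
    p ∈ chainExponents m ↔ p.1 = 2 ∧ p.2 = 0 ∨ p.1 < 2 ∧ p.2 ≤ m := by
  simp [chainExponents, Prod.ext_iff]

theorem card_chainExponents (m : ℕ) : #(chainExponents m) = 2 * m + 3 := by
  rw [chainExponents, card_insert_of_notMem (by simp), card_product, card_range, card_range]
  ring

section Relations

variable {K A : Type*} [Field K] [CommRing A] [Algebra K A] {c : K} {m : ℕ} {x y : A}

theorem pow_succ_eq_zero_of_chain (hc : c ≠ 0) (hxy : x ^ 2 * y = 0)
    (hx : x ^ 3 + c • y ^ m = 0) : y ^ (m + 1) = 0 := by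
  have : c • y ^ (m + 1) = 0 := by
    simp only [Algebra.smul_def] at hx ⊢
    linear_combination y * hx - x * hxy
  exact (smul_eq_zero.mp this).resolve_left hc

theorem chainMonomial_eq_zero (hc : c ≠ 0) (hxy : x ^ 2 * y = 0) (hx : x ^ 3 + c • y ^ m = 0)
    {a b : ℕ} (h : 2 ≤ a ∧ 1 ≤ b ∨ m < b) : x ^ a * y ^ b = 0 := by
  rcases h with ⟨ha, hb⟩ | hb
  · obtain ⟨a, rfl⟩ := Nat.exists_eq_add_of_le' ha
    obtain ⟨b, rfl⟩ := Nat.exists_eq_add_of_le' hb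
    calc x ^ (a + 2) * y ^ (b + 1) = x ^ a * y ^ b * (x ^ 2 * y) := by ring
      _ = 0 := by rw [hxy, mul_zero]
  · rw [pow_eq_zero_of_le hb (pow_succ_eq_zero_of_chain hc hxy hx), mul_zero]

theorem span_chainMonomials_eq_top (hc : c ≠ 0) (hgen : Algebra.adjoin K {x, y} = ⊤)
    (hxy : x ^ 2 * y = 0) (hx : x ^ 3 + c • y ^ m = 0) :
    Submodule.span K (Set.range fun p : chainExponents m => x ^ p.1.1 * y ^ p.1.2) = ⊤ := by
  set W := Submodule.span K (Set.range fun p : chainExponents m => x ^ p.1.1 * y ^ p.1.2)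
  have hmem : ∀ a b, (a, b) ∈ chainExponents m ∨ 2 ≤ a ∧ 1 ≤ b ∨ m < b → x ^ a * y ^ b ∈ W := by
    rintro a b (h | h)
    · exact Submodule.subset_span ⟨⟨(a, b), h⟩, rfl⟩
    · rw [chainMonomial_eq_zero hc hxy hx h]
      exact W.zero_mem
  refine Submodule.span_eq_top_of_mul_mem hgen
    (by simpa using hmem 0 0 (.inl (mem_chainExponents.mpr (by omega)))) ?_
  simp only [Set.mem_insert_iff, Set.mem_singleton_iff, forall_eq_or_imp, forall_eq,
    Set.forall_mem_range, Subtype.forall, Prod.forall]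
  refine ⟨fun a b hp => ?_, fun a b hp => ?_⟩
  all_goals rw [mem_chainExponents] at hp
  · by_cases h20 : a = 2 ∧ b = 0
    · obtain ⟨rfl, rfl⟩ := h20
      have : x * (x ^ 2 * y ^ 0) = -c • (x ^ 0 * y ^ m) := by
        simp only [Algebra.smul_def, map_neg] at hx ⊢
        linear_combination hx
      rw [this]
      exact W.smul_mem _ (hmem 0 m (.inl (mem_chainExponents.mpr (by omega))))
    · rw [← mul_assoc, ← pow_succ']
      refine hmem _ _ ?_
      rw [mem_chainExponents]
      omega
  · rw [mul_left_comm, ← pow_succ']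
    refine hmem _ _ ?_
    rw [mem_chainExponents]
    omega

end Relations

noncomputable section

variable {K : Type*} [Field K]

/-- For `c = m + 1` this is, up to the unit `3` on the first generator, the Jacobian ideal of
`x³y + yᵐ⁺¹`. -/
def chainIdeal (c : K) (m : ℕ) : Ideal (MvPolynomial (Fin 2) K) :=
  Ideal.span {X 0 ^ 2 * X 1, X 0 ^ 3 + C c * X 1 ^ m}

abbrev ChainQuotient (c : K) (m : ℕ) : Type _ := MvPolynomial (Fin 2) K ⧸ chainIdeal c m

abbrev expXY (a b : ℕ) : Fin 2 →₀ ℕ := Finsupp.single 0 a + Finsupp.single 1 b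

theorem X_pow_mul_X_pow_eq_monomial (a b : ℕ) :
    (X 0 ^ a * X 1 ^ b : MvPolynomial (Fin 2) K) = monomial (expXY a b) 1 := by
  rw [X_pow_eq_monomial, X_pow_eq_monomial, monomial_mul, one_mul]

theorem expXY_le_expXY {a b a' b' : ℕ} : expXY a b ≤ expXY a' b' ↔ a ≤ a' ∧ b ≤ b' := by
  simp [Finsupp.le_def, Fin.forall_fin_two]

theorem expXY_inj {a b a' b' : ℕ} : expXY a b = expXY a' b' ↔ a = a' ∧ b = b' := by
  simp [Finsupp.ext_iff, Fin.forall_fin_two]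

theorem expXY_sub_expXY (a b a' b' : ℕ) : expXY a b - expXY a' b' = expXY (a - a') (b - b') := by
  ext i; fin_cases i <;> simp

/-- The coefficient of `xᵃyᵇ` after the reduction `xᵃ⁺³ ↦ -c xᵃyᵐ`. -/
def chainDual (c : K) (m : ℕ) (p : ℕ × ℕ) : MvPolynomial (Fin 2) K →ₗ[K] K :=
  lcoeff K (expXY p.1 p.2) - (if p.2 = m then c else 0) • lcoeff K (expXY (p.1 + 3) 0)

theorem chainDual_X_pow_mul_X_pow {c : K} {m : ℕ} {p q : ℕ × ℕ} (hq : q.1 ≤ 2) :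
    chainDual c m p (X 0 ^ q.1 * X 1 ^ q.2) = if q = p then 1 else 0 := by
  simp only [chainDual, X_pow_mul_X_pow_eq_monomial, LinearMap.sub_apply, LinearMap.smul_apply,
    lcoeff_apply, coeff_monomial, expXY_inj, Prod.ext_iff]
  have hne : ¬(q.1 = p.1 + 3 ∧ q.2 = 0) := by omega
  simp only [hne, if_false, smul_zero, sub_zero]

theorem chainDual_eq_zero_of_mem {c : K} {m : ℕ} (hm : m ≠ 0) {p : ℕ × ℕ}
    (hp : p ∈ chainExponents m) {f : MvPolynomial (Fin 2) K} (hf : f ∈ chainIdeal c m) :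
    chainDual c m p f = 0 := by
  rw [mem_chainExponents] at hp
  obtain ⟨u, v, rfl⟩ := Ideal.mem_span_pair.mp hf
  have hgen₁ : X 0 ^ 2 * X 1 = (monomial (expXY 2 1) 1 : MvPolynomial (Fin 2) K) := by
    rw [← X_pow_mul_X_pow_eq_monomial, pow_one]
  have hgen₂ : X 0 ^ 3 + C c * X 1 ^ m = monomial (expXY 3 0) 1 + monomial (expXY 0 m) c := by
    rw [C_mul_X_pow_eq_monomial, X_pow_eq_monomial]
    simp [expXY]
  simp only [chainDual, hgen₁, hgen₂, mul_add, map_add, LinearMap.sub_apply, LinearMap.smul_apply,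
    lcoeff_apply, coeff_mul_monomial', expXY_le_expXY, expXY_sub_expXY]
  -- Only the coefficient of `xᵃ` in `v` survives, from `v * c yᵐ` (when `b = m`) and from `v * x³`,
  -- and the two cancel; `m ≠ 0` keeps `v * c yᵐ` away from `xᵃ⁺³`.
  split_ifs <;> try omega
  all_goals simp_all [mul_comm]

abbrev chainX (c : K) (m : ℕ) : ChainQuotient c m := Ideal.Quotient.mk _ (X 0)
abbrev chainY (c : K) (m : ℕ) : ChainQuotient c m := Ideal.Quotient.mk _ (X 1)

def chainCoordinates (c : K) {m : ℕ} (hm : m ≠ 0) : ChainQuotient c m →ₗ[K] (chainExponents m → K) :=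
  ((chainIdeal c m).restrictScalars K).liftQ (LinearMap.pi fun p => chainDual c m p)
      (fun _ hf => LinearMap.mem_ker.mpr (funext fun p => chainDual_eq_zero_of_mem hm p.2 hf)) ∘ₗ
    (Submodule.Quotient.restrictScalarsEquiv K (chainIdeal c m)).symm.toLinearMap

theorem chainCoordinates_mk {c : K} {m : ℕ} (hm : m ≠ 0) (f : MvPolynomial (Fin 2) K)
    (p : chainExponents m) : chainCoordinates c hm (Ideal.Quotient.mk _ f) p = chainDual c m p f :=
  rfl

theorem linearIndependent_chainMonomials (c : K) {m : ℕ} (hm : m ≠ 0) :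
    LinearIndependent K fun p : chainExponents m => chainX c m ^ p.1.1 * chainY c m ^ p.1.2 := by
  refine .of_comp (chainCoordinates c hm) ?_
  convert (Pi.basisFun K (chainExponents m)).linearIndependent using 1
  funext q p
  have hq : q.1.1 ≤ 2 := by have := mem_chainExponents.mp q.2; omega
  rw [Function.comp_apply, ← map_pow, ← map_pow, ← map_mul, chainCoordinates_mk,
    chainDual_X_pow_mul_X_pow hq, Pi.basisFun_apply, Pi.single_apply]
  simp only [Subtype.ext_iff, eq_comm]

theorem adjoin_chainX_chainY (c : K) (m : ℕ) :
    Algebra.adjoin K {chainX c m, chainY c m} = ⊤ := by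
  have hX : Algebra.adjoin K {X 0, X 1} = (⊤ : Subalgebra K (MvPolynomial (Fin 2) K)) := by
    rw [← adjoin_range_X]
    congr 1
    ext
    simp [Fin.exists_fin_two, eq_comm]
  have := Algebra.adjoin_image K (Ideal.Quotient.mkₐ K (chainIdeal c m)) {X 0, X 1}
  rw [hX, Algebra.map_top, (AlgHom.range_eq_top _).mpr (Ideal.Quotient.mkₐ_surjective K _),
    Set.image_pair] at this
  exact this

theorem chainX_sq_mul_chainY (c : K) (m : ℕ) : chainX c m ^ 2 * chainY c m = 0 := by
  rw [← map_pow, ← map_mul, Ideal.Quotient.eq_zero_iff_mem]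
  exact Ideal.subset_span (by simp)

theorem chainX_pow_three_add_smul (c : K) (m : ℕ) : chainX c m ^ 3 + c • chainY c m ^ m = 0 := by
  have : chainX c m ^ 3 + c • chainY c m ^ m =
      Ideal.Quotient.mkₐ K (chainIdeal c m) (X 0 ^ 3 + C c * X 1 ^ m) := by
    rw [← smul_eq_C_mul, map_add, map_smul, map_pow, map_pow]
    rfl
  rw [this, Ideal.Quotient.mkₐ_eq_mk, Ideal.Quotient.eq_zero_iff_mem]
  exact Ideal.subset_span (by simp)

def chainBasis {c : K} (hc : c ≠ 0) {m : ℕ} (hm : m ≠ 0) :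
    Module.Basis (chainExponents m) K (ChainQuotient c m) :=
  .mk (linearIndependent_chainMonomials c hm)
    (span_chainMonomials_eq_top hc (adjoin_chainX_chainY c m) (chainX_sq_mul_chainY c m)
      (chainX_pow_three_add_smul c m)).ge

theorem finrank_chainQuotient {c : K} (hc : c ≠ 0) {m : ℕ} (hm : m ≠ 0) :
    Module.finrank K (ChainQuotient c m) = 2 * m + 3 := by
  rw [Module.finrank_eq_card_basis (chainBasis hc hm), Fintype.card_coe, card_chainExponents]

end

theorem milnor_ring_E19T_dim :
    FiniteDimensional ℂ (MvPolynomial (Fin 2) ℂ ⧸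
      Ideal.span ({(3 : MvPolynomial (Fin 2) ℂ) * X 0 ^ 2 * X 1, X 0 ^ 3 + 7 * X 1 ^ 6} : Set (MvPolynomial (Fin 2) ℂ))) ∧
    Module.finrank ℂ (MvPolynomial (Fin 2) ℂ ⧸
      Ideal.span ({(3 : MvPolynomial (Fin 2) ℂ) * X 0 ^ 2 * X 1, X 0 ^ 3 + 7 * X 1 ^ 6} : Set (MvPolynomial (Fin 2) ℂ))) = 15 := by
  have hI : Ideal.span {(3 : MvPolynomial (Fin 2) ℂ) * X 0 ^ 2 * X 1, X 0 ^ 3 + 7 * X 1 ^ 6} =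
      chainIdeal (7 : ℂ) 6 := by
    have h3 : IsUnit (3 : MvPolynomial (Fin 2) ℂ) := by
      rw [← map_ofNat C 3]
      exact (isUnit_iff_ne_zero.mpr three_ne_zero).map C
    rw [chainIdeal, Ideal.span_insert, Ideal.span_insert, mul_assoc,
      Ideal.span_singleton_mul_left_unit h3, ← map_ofNat C 7]
  rw [hI]
  exact ⟨(chainBasis (by norm_num) (by norm_num)).finiteDimensional_of_finite,
    finrank_chainQuotient (by norm_num) (by norm_num)⟩
end

section
/- The quotient ring ℂ[X,Y,Z]/(2X + Z³, 3Y²Z, Y³ + 3XZ²) is a finite-dimensional ℂ-vector space of dimension 13. -/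
/-!
Eliminating `x` through `2 * x = -z ^ 3`, the Jacobian ideal contains `y ^ 2 * z`,
`y ^ 3 - 3 / 2 * z ^ 5` and `z ^ 6`, so the thirteen monomials `y ^ b * z ^ c` with `b ≤ 1, c ≤ 5`
or `(b, c) = (2, 0)` span the Milnor ring. They are independent because the Milnor ring is
Gorenstein with socle spanned by `y * z ^ 5`: the functional reading off the coefficient of
`y * z ^ 5` kills the ideal and pairs the thirteen monomials perfectly
(`z ^ c ↔ y * z ^ (5 - c)`, `y ^ 2 ↔ y ^ 2`).
-/

open MvPolynomial

section General

variable {K A ι : Type*}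

theorem Submodule.span_range_eq_top_of_mul_mem [CommSemiring K] [Semiring A] [Algebra K A]
    (v : ι → A) {s : Set A} (hs : Algebra.adjoin K s = ⊤) (h1 : 1 ∈ span K (Set.range v))
    (hmul : ∀ i, ∀ a ∈ s, v i * a ∈ span K (Set.range v)) : span K (Set.range v) = ⊤ := by
  set W := span K (Set.range v)
  have mul_gen : ∀ a ∈ s, ∀ w ∈ W, w * a ∈ W := fun a ha w hw ↦ by
    induction hw using Submodule.span_induction with
    | mem _ hw => obtain ⟨i, rfl⟩ := hw; exact hmul i a ha
    | zero => simp
    | add _ _ _ _ hx hy => rw [add_mul]; exact W.add_mem hx hy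
    | smul r _ _ hx => rw [smul_mul_assoc]; exact W.smul_mem r hx
  have mul_all : ∀ a : A, ∀ w ∈ W, w * a ∈ W := fun a ↦ by
    have ha : a ∈ Algebra.adjoin K s := hs ▸ Algebra.mem_top
    induction ha using Algebra.adjoin_induction with
    | mem a ha => exact mul_gen a ha
    | algebraMap r =>
      intro w hw
      rw [← Algebra.commutes, ← Algebra.smul_def]
      exact W.smul_mem r hw
    | add _ _ _ _ hx hy => intro w hw; rw [mul_add]; exact W.add_mem (hx w hw) (hy w hw)
    | mul _ _ _ _ hx hy => intro w hw; rw [← mul_assoc]; exact hy _ (hx w hw)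
  exact eq_top_iff.2 fun a _ ↦ one_mul a ▸ mul_all a 1 h1

theorem Ideal.Quotient.linearIndependent_mkₐ_of_pairing [Field K] [CommRing A] [Algebra K A]
    {I : Ideal A} (L : A →ₗ[K] K) (hL : ∀ q ∈ I, ∀ p, L (p * q) = 0) (v w : ι → A)
    (hvw : ∀ i j, L (w j * v i) ≠ 0 ↔ i = j) :
    LinearIndependent K fun i ↦ Ideal.Quotient.mkₐ K I (v i) := by
  classical
  rw [linearIndependent_iff']
  intro s c hc j hj
  have hmem : ∑ i ∈ s, c i • v i ∈ I := by
    rw [← Ideal.Quotient.eq_zero_iff_mem, ← Ideal.Quotient.mkₐ_eq_mk K, map_sum]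
    simpa only [map_smul] using hc
  have := hL _ hmem (w j)
  simp only [Finset.mul_sum, mul_smul_comm, map_sum, map_smul, smul_eq_mul] at this
  rw [Finset.sum_eq_single j
    (fun i _ hij ↦ by rw [not_ne_iff.1 (mt (hvw i j).1 hij), mul_zero]) (absurd hj)] at this
  exact (mul_eq_zero.1 this).resolve_right ((hvw j j).2 rfl)

theorem AddMonoidHom.map_mul_eq_zero_of_mem_span {M : Type*} [CommSemiring A] [AddCommMonoid M]
    (L : A →+ M) {s : Set A} (hs : ∀ g ∈ s, ∀ p, L (p * g) = 0) {q : A} (hq : q ∈ Ideal.span s)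
    (p : A) : L (p * q) = 0 := by
  induction hq using Submodule.span_induction generalizing p with
  | mem g hg => exact hs g hg p
  | zero => rw [mul_zero, map_zero]
  | add _ _ _ _ hx hy => rw [mul_add, map_add, hx, hy, add_zero]
  | smul a x _ hx => rw [smul_eq_mul, ← mul_assoc]; exact hx (p * a)

end General

noncomputable section

namespace MilnorQ11T

abbrev jacobianGenerators : Set (MvPolynomial (Fin 3) ℂ) :=
  {2 * X 0 + X 2 ^ 3, 3 * X 1 ^ 2 * X 2, X 1 ^ 3 + 3 * X 0 * X 2 ^ 2}

abbrev jacobianIdeal : Ideal (MvPolynomial (Fin 3) ℂ) := Ideal.span jacobianGenerators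

local notation "π" => Ideal.Quotient.mkₐ ℂ jacobianIdeal

theorem X_zero_add_smul_mem : X 0 + (1 / 2 : ℂ) • X 2 ^ 3 ∈ jacobianIdeal :=
  Submodule.mem_span_triple.2 ⟨C (1 / 2), 0, 0, funext fun x ↦ by
    simp only [smul_eq_mul, zero_mul, add_zero, map_mul, eval_C, map_add, eval_ofNat, eval_X,
      map_pow, smul_eval]
    ring⟩

theorem X_one_sq_mul_X_two_mem : X 1 ^ 2 * X 2 ∈ jacobianIdeal :=
  Submodule.mem_span_triple.2 ⟨0, C (1 / 3), 0, funext fun x ↦ by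
    simp only [smul_eq_mul, zero_mul, zero_add, add_zero, map_mul, eval_C, eval_ofNat, map_pow,
      eval_X]
    ring⟩

theorem X_one_pow_three_sub_smul_mem : X 1 ^ 3 - (3 / 2 : ℂ) • X 2 ^ 5 ∈ jacobianIdeal :=
  Submodule.mem_span_triple.2 ⟨-C (3 / 2) * X 2 ^ 2, 0, 1, funext fun x ↦ by
    simp only [smul_eq_mul, zero_mul, add_zero, one_mul, map_add, map_neg, map_mul, eval_C,
      map_pow, eval_X, eval_ofNat, map_sub, smul_eval]
    ring⟩

theorem X_two_pow_six_mem : X 2 ^ 6 ∈ jacobianIdeal :=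
  Submodule.mem_span_triple.2 ⟨X 2 ^ 3, C (2 / 9) * X 1, -C (2 / 3) * X 2, funext fun x ↦ by
    simp only [smul_eq_mul, map_add, map_mul, map_pow, eval_X, eval_ofNat, eval_C, map_neg]
    ring⟩

def yzMonomial (p : ℕ × ℕ) : MvPolynomial (Fin 3) ℂ := X 1 ^ p.1 * X 2 ^ p.2

theorem yzMonomial_add (p q : ℕ × ℕ) : yzMonomial (p + q) = yzMonomial p * yzMonomial q := by
  simp only [yzMonomial, Prod.fst_add, Prod.snd_add]; ring

theorem yzMonomial_mem_jacobianIdeal {p : ℕ × ℕ} (h : 2 ≤ p.1 ∧ 1 ≤ p.2 ∨ 6 ≤ p.2) :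
    yzMonomial p ∈ jacobianIdeal := by
  obtain ⟨b, c⟩ := p
  rcases h with ⟨hb, hc⟩ | hc
  · obtain ⟨b, rfl⟩ := Nat.exists_eq_add_of_le' hb
    obtain ⟨c, rfl⟩ := Nat.exists_eq_add_of_le' hc
    rw [show yzMonomial (b + 2, c + 1) = X 1 ^ 2 * X 2 * yzMonomial (b, c) by
      simp only [yzMonomial]; ring]
    exact Ideal.mul_mem_right _ _ X_one_sq_mul_X_two_mem
  · obtain ⟨c, rfl⟩ := Nat.exists_eq_add_of_le' hc
    rw [show yzMonomial (b, c + 6) = X 2 ^ 6 * yzMonomial (b, c) by simp only [yzMonomial]; ring]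
    exact Ideal.mul_mem_right _ _ X_two_pow_six_mem

/-- Exponents `(b, c)` of the monomials `y ^ b * z ^ c` not divisible by `y ^ 2 * z`, `y ^ 3`
or `z ^ 6`, the leading terms of a Gröbner basis of the Jacobian ideal after eliminating `x`. -/
def standardExps : Finset (ℕ × ℕ) :=
  (Finset.range 3 ×ˢ Finset.range 6).filter fun p ↦ ¬(2 ≤ p.1 ∧ 1 ≤ p.2)

theorem card_standardExps : standardExps.card = 13 := by decide

/-- The coefficient of the socle monomial `y * z ^ 5` in the normal form of `y ^ b * z ^ c` modulo
`y ^ 2 * z` and `y ^ 3 - 3 / 2 * z ^ 5`. -/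
def socleCoeff (p : ℕ × ℕ) : ℂ :=
  if p = (1, 5) then 1 else if p = (4, 0) then 3 / 2 else 0

theorem socleCoeff_ne_zero_iff {p : ℕ × ℕ} : socleCoeff p ≠ 0 ↔ p = (1, 5) ∨ p = (4, 0) := by
  unfold socleCoeff; split_ifs <;> simp_all

theorem socleCoeff_add_two_add_one (b c : ℕ) : socleCoeff (b + 2, c + 1) = 0 := by
  simp [socleCoeff]

theorem socleCoeff_add_three (b c : ℕ) :
    socleCoeff (b + 3, c) = 3 / 2 * socleCoeff (b, c + 5) := by
  unfold socleCoeff; split_ifs <;> simp_all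

/-- The coefficient of `y * z ^ 5` in the normal form, after substituting `x = -z ^ 3 / 2`. -/
def socleFunctional : MvPolynomial (Fin 3) ℂ →ₗ[ℂ] ℂ :=
  (basisMonomials (Fin 3) ℂ).constr ℂ fun d ↦ (-1 / 2) ^ d 0 * socleCoeff (d 1, d 2 + 3 * d 0)

theorem socleFunctional_X_pow_mul (a b c : ℕ) :
    socleFunctional (X 0 ^ a * X 1 ^ b * X 2 ^ c) =
      (-1 / 2) ^ a * socleCoeff (b, c + 3 * a) := by
  have h := (basisMonomials (Fin 3) ℂ).constr_basis ℂ
    (fun d ↦ (-1 / 2 : ℂ) ^ d 0 * socleCoeff (d 1, d 2 + 3 * d 0))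
    (Finsupp.single 0 a + Finsupp.single 1 b + Finsupp.single 2 c)
  simp only [coe_basisMonomials] at h
  rw [X_pow_eq_monomial, X_pow_eq_monomial, X_pow_eq_monomial, monomial_mul, monomial_mul,
    mul_one, mul_one, socleFunctional, h]
  simp

theorem socleFunctional_X_pow_mul_mul_generator (a b c : ℕ) {g : MvPolynomial (Fin 3) ℂ}
    (hg : g ∈ jacobianGenerators) :
    socleFunctional (X 0 ^ a * X 1 ^ b * X 2 ^ c * g) = 0 := by
  rcases hg with rfl | rfl | rfl
  · rw [show (X 0 ^ a * X 1 ^ b * X 2 ^ c : MvPolynomial (Fin 3) ℂ) * (2 * X 0 + X 2 ^ 3) =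
        2 • (X 0 ^ (a + 1) * X 1 ^ b * X 2 ^ c) + X 0 ^ a * X 1 ^ b * X 2 ^ (c + 3) by ring,
      map_add, map_nsmul, socleFunctional_X_pow_mul, socleFunctional_X_pow_mul,
      show c + 3 * (a + 1) = c + 3 + 3 * a by ring]
    simp only [nsmul_eq_mul]
    ring
  · rw [show (X 0 ^ a * X 1 ^ b * X 2 ^ c : MvPolynomial (Fin 3) ℂ) * (3 * X 1 ^ 2 * X 2) =
        3 • (X 0 ^ a * X 1 ^ (b + 2) * X 2 ^ (c + 1)) by ring,
      map_nsmul, socleFunctional_X_pow_mul, show c + 1 + 3 * a = c + 3 * a + 1 by ring,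
      socleCoeff_add_two_add_one, mul_zero, smul_zero]
  · rw [show (X 0 ^ a * X 1 ^ b * X 2 ^ c : MvPolynomial (Fin 3) ℂ) *
          (X 1 ^ 3 + 3 * X 0 * X 2 ^ 2) =
        X 0 ^ a * X 1 ^ (b + 3) * X 2 ^ c + 3 • (X 0 ^ (a + 1) * X 1 ^ b * X 2 ^ (c + 2)) by ring,
      map_add, map_nsmul, socleFunctional_X_pow_mul, socleFunctional_X_pow_mul,
      socleCoeff_add_three, show c + 2 + 3 * (a + 1) = c + 3 * a + 5 by ring]
    simp only [nsmul_eq_mul]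
    ring

theorem monomial_one_eq_X_pow_mul (d : Fin 3 →₀ ℕ) :
    monomial d (1 : ℂ) = X 0 ^ d 0 * X 1 ^ d 1 * X 2 ^ d 2 := by
  rw [monomial_eq, C_1, one_mul, Finsupp.prod_fintype _ _ fun _ ↦ pow_zero _, Fin.prod_univ_three]

theorem socleFunctional_mul_eq_zero {q : MvPolynomial (Fin 3) ℂ} (hq : q ∈ jacobianIdeal)
    (p : MvPolynomial (Fin 3) ℂ) : socleFunctional (p * q) = 0 := by
  refine socleFunctional.toAddMonoidHom.map_mul_eq_zero_of_mem_span (fun g hg p ↦ ?_) hq p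
  have : socleFunctional ∘ₗ LinearMap.mulRight ℂ g = 0 :=
    (basisMonomials (Fin 3) ℂ).ext fun d ↦ by
      simpa [monomial_one_eq_X_pow_mul] using socleFunctional_X_pow_mul_mul_generator _ _ _ hg
  exact LinearMap.congr_fun this p

theorem socleFunctional_yzMonomial (p : ℕ × ℕ) :
    socleFunctional (yzMonomial p) = socleCoeff p := by
  simpa [yzMonomial] using socleFunctional_X_pow_mul 0 p.1 p.2

/-- The partner of `y ^ b * z ^ c` under the pairing `(u, v) ↦ socleFunctional (u * v)`: their
product is the socle monomial `y * z ^ 5`, except for `y ^ 2`, which pairs with itself to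
`y ^ 4 = 3 / 2 * y * z ^ 5`. -/
def socleDual (p : ℕ × ℕ) : ℕ × ℕ := if p = (2, 0) then (2, 0) else (1, 5) - p

theorem socleCoeff_socleDual_add_ne_zero_iff :
    ∀ p ∈ standardExps, ∀ q ∈ standardExps, socleCoeff (socleDual q + p) ≠ 0 ↔ p = q := by
  simp_rw [socleCoeff_ne_zero_iff]
  decide

theorem linearIndependent_standardMonomials :
    LinearIndependent ℂ fun p : standardExps ↦ π (yzMonomial p) :=
  Ideal.Quotient.linearIndependent_mkₐ_of_pairing socleFunctional
    (fun _ hq ↦ socleFunctional_mul_eq_zero hq) _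
    (fun q : standardExps ↦ yzMonomial (socleDual q))
    fun p q ↦ by
      rw [← yzMonomial_add, socleFunctional_yzMonomial, Subtype.ext_iff]
      exact socleCoeff_socleDual_add_ne_zero_iff p p.2 q q.2

theorem mkₐ_yzMonomial_mem_span (p : ℕ × ℕ) :
    π (yzMonomial p) ∈ Submodule.span ℂ (Set.range fun q : standardExps ↦ π (yzMonomial q)) := by
  set W := Submodule.span ℂ (Set.range fun q : standardExps ↦ π (yzMonomial q))
  have reduced : ∀ q : ℕ × ℕ, q ∈ standardExps ∨ 2 ≤ q.1 ∧ 1 ≤ q.2 ∨ 6 ≤ q.2 →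
      π (yzMonomial q) ∈ W := by
    rintro q (hq | hq)
    · exact Submodule.subset_span ⟨⟨q, hq⟩, rfl⟩
    · rw [Ideal.Quotient.mkₐ_eq_mk,
        Ideal.Quotient.eq_zero_iff_mem.2 (yzMonomial_mem_jacobianIdeal hq)]
      exact W.zero_mem
  by_cases hp : p ∈ standardExps ∨ 2 ≤ p.1 ∧ 1 ≤ p.2 ∨ 6 ≤ p.2
  · exact reduced p hp
  obtain ⟨b, rfl⟩ : ∃ b, p = (b + 3, 0) := by
    simp only [standardExps, Finset.mem_filter, Finset.mem_product, Finset.mem_range] at hp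
    exact ⟨p.1 - 3, Prod.ext (by omega) (by omega)⟩
  have hy3 : π (yzMonomial (b + 3, 0)) = (3 / 2 : ℂ) • π (yzMonomial (b, 5)) := by
    rw [← map_smul, Ideal.Quotient.mkₐ_eq_mk, Ideal.Quotient.eq]
    convert Ideal.mul_mem_left _ (X 1 ^ b) X_one_pow_three_sub_smul_mem using 1
    simp only [yzMonomial, mul_sub, mul_smul_comm]
    ring
  rw [hy3]
  refine W.smul_mem _ (reduced _ ?_)
  simp only [standardExps, Finset.mem_filter, Finset.mem_product, Finset.mem_range]
  omega

theorem mkₐ_yzMonomial_mul_X_mem_span (p : ℕ × ℕ) (i : Fin 3) :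
    π (yzMonomial p * X i) ∈
      Submodule.span ℂ (Set.range fun q : standardExps ↦ π (yzMonomial q)) := by
  match i with
  | 0 =>
    have hx : π (yzMonomial p * X 0) = (-1 / 2 : ℂ) • π (yzMonomial (p.1, p.2 + 3)) := by
      rw [← map_smul, Ideal.Quotient.mkₐ_eq_mk, Ideal.Quotient.eq]
      convert Ideal.mul_mem_left _ (yzMonomial p) X_zero_add_smul_mem using 1
      simp only [yzMonomial, mul_add, mul_smul_comm, pow_add, ← mul_assoc]
      module
    rw [hx]
    exact Submodule.smul_mem _ _ (mkₐ_yzMonomial_mem_span _)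
  | 1 =>
    rw [show yzMonomial p * X 1 = yzMonomial (p.1 + 1, p.2) by simp only [yzMonomial]; ring]
    exact mkₐ_yzMonomial_mem_span _
  | 2 =>
    rw [show yzMonomial p * X 2 = yzMonomial (p.1, p.2 + 1) by simp only [yzMonomial]; ring]
    exact mkₐ_yzMonomial_mem_span _

theorem span_standardMonomials_eq_top :
    Submodule.span ℂ (Set.range fun p : standardExps ↦ π (yzMonomial p)) = ⊤ := by
  have hgen : Algebra.adjoin ℂ (Set.range fun i ↦ π (X i)) = ⊤ := by
    rw [Set.range_comp' π X, ← AlgHom.map_adjoin, adjoin_range_X, Algebra.map_top,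
      AlgHom.range_eq_top]
    exact Ideal.Quotient.mkₐ_surjective ℂ _
  refine Submodule.span_range_eq_top_of_mul_mem _ hgen ?_ ?_
  · simpa [yzMonomial] using mkₐ_yzMonomial_mem_span (0, 0)
  · rintro p _ ⟨i, rfl⟩
    rw [← map_mul]
    exact mkₐ_yzMonomial_mul_X_mem_span p i

def standardBasis : Module.Basis standardExps ℂ (MvPolynomial (Fin 3) ℂ ⧸ jacobianIdeal) :=
  .mk linearIndependent_standardMonomials span_standardMonomials_eq_top.ge

end MilnorQ11T

end

theorem milnor_ring_Q11T_dim :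
    FiniteDimensional ℂ (MvPolynomial (Fin 3) ℂ ⧸
      Ideal.span ({(2 : MvPolynomial (Fin 3) ℂ) * X 0 + X 2 ^ 3, 3 * X 1 ^ 2 * X 2, X 1 ^ 3 + 3 * X 0 * X 2 ^ 2} : Set (MvPolynomial (Fin 3) ℂ))) ∧
    Module.finrank ℂ (MvPolynomial (Fin 3) ℂ ⧸
      Ideal.span ({(2 : MvPolynomial (Fin 3) ℂ) * X 0 + X 2 ^ 3, 3 * X 1 ^ 2 * X 2, X 1 ^ 3 + 3 * X 0 * X 2 ^ 2} : Set (MvPolynomial (Fin 3) ℂ))) = 13 :=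
  ⟨.of_basis MilnorQ11T.standardBasis, by
    rw [Module.finrank_eq_card_basis MilnorQ11T.standardBasis, Fintype.card_coe,
      MilnorQ11T.card_standardExps]⟩
end

section
/- The quotient ring ℂ[X,Y,Z]/(2X + Y², 2XY + Z⁴, YZ³) is a finite-dimensional ℂ-vector space of dimension 13. -/
/-!
Since `2` is invertible, `x = -y²/2` in the quotient, which is therefore `K[y, z]/(y³ - z⁴, yz³)`;
there also `z⁷ = y² · yz³ = 0`, so the 13 staircase monomials `zᶜ (c ≤ 6)`, `yzᶜ`, `y²zᶜ (c ≤ 2)`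
span it. For their independence, restrict to the curve `x = -t⁸/2, y = t⁴, z = t³`: it kills the
first two generators and sends `yz³` to `t¹³`, so the ideal lands in `t¹³ · K[t³, t⁴]`. The staircase
monomials go to `t^(4b+3c)` for 13 distinct exponents, none of them `13 + m` with `m ∈ ⟨3, 4⟩`.
-/

open MvPolynomial

namespace Polynomial

variable {R : Type*} [CommSemiring R]

/-- The semigroup ring `R[t^M] ⊆ R[t]` of a submonoid `M ⊆ ℕ`. -/
noncomputable def semigroupSubalgebra (M : AddSubmonoid ℕ) : Subalgebra R R[X] where
  carrier := {p | ∀ n, p.coeff n ≠ 0 → n ∈ M}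
  mul_mem' {p q} hp hq n hn := by
    rw [coeff_mul] at hn
    obtain ⟨⟨i, j⟩, hij, hne⟩ := Finset.exists_ne_zero_of_sum_ne_zero hn
    rw [Finset.HasAntidiagonal.mem_antidiagonal] at hij
    exact hij ▸ M.add_mem (hp i (left_ne_zero_of_mul hne)) (hq j (right_ne_zero_of_mul hne))
  add_mem' {p q} hp hq n hn := by
    rw [coeff_add] at hn
    by_cases hpn : p.coeff n = 0
    · exact hq n (by simpa [hpn] using hn)
    · exact hp n hpn
  algebraMap_mem' a n hn := by
    rw [algebraMap_apply, Algebra.algebraMap_self, RingHom.id_apply, coeff_C] at hn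
    split_ifs at hn with h
    · exact h ▸ M.zero_mem
    · exact absurd rfl hn

theorem C_mul_X_pow_mem_semigroupSubalgebra {M : AddSubmonoid ℕ} (a : R) {n : ℕ} (hn : n ∈ M) :
    C a * X ^ n ∈ semigroupSubalgebra M := by
  intro k hk
  rw [coeff_C_mul_X_pow] at hk
  split_ifs at hk with h
  · exact h ▸ hn
  · exact absurd rfl hk

end Polynomial

/-- The numerical semigroup generated by `3` and `4`. -/
def semigroup34 : AddSubmonoid ℕ where
  carrier := {n | n ≠ 1 ∧ n ≠ 2 ∧ n ≠ 5}
  add_mem' := by simp only [Set.mem_ofPred_eq]; omega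
  zero_mem' := by simp

theorem mem_semigroup34 {n : ℕ} : n ∈ semigroup34 ↔ n ≠ 1 ∧ n ≠ 2 ∧ n ≠ 5 := Iff.rfl

def staircase : Finset (ℕ × ℕ) :=
  (Finset.range 3 ×ˢ Finset.range 7).filter fun p => p.1 = 0 ∨ p.2 < 3

theorem weight_injOn_staircase :
    Set.InjOn (fun p : ℕ × ℕ => 4 * p.1 + 3 * p.2) staircase := by
  have h : ∀ p ∈ staircase, ∀ q ∈ staircase, 4 * p.1 + 3 * p.2 = 4 * q.1 + 3 * q.2 → p = q := by
    decide
  exact fun p hp q hq => h p hp q hq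

theorem pow_mul_pow_eq_zero_or_mem_staircase {M₀ : Type*} [CommMonoidWithZero M₀] {y z : M₀}
    (h₁ : y ^ 3 = z ^ 4) (h₂ : y * z ^ 3 = 0) (b c : ℕ) :
    y ^ b * z ^ c = 0 ∨ ∃ p ∈ staircase, y ^ b * z ^ c = y ^ p.1 * z ^ p.2 := by
  induction b using Nat.strong_induction_on generalizing c with
  | _ b ih =>
  rcases Nat.lt_or_ge b 3 with hb | hb
  · by_cases hp : (b, c) ∈ staircase
    · exact Or.inr ⟨_, hp, rfl⟩
    left
    simp only [staircase, Finset.mem_filter, Finset.mem_product, Finset.mem_range] at hp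
    rcases b with _ | b
    · obtain ⟨c, rfl⟩ : ∃ c', c = c' + 7 := ⟨c - 7, by omega⟩
      calc y ^ 0 * z ^ (c + 7) = z ^ c * z ^ 3 * z ^ 4 := by
            rw [← pow_add, ← pow_add, pow_zero, one_mul]
        _ = z ^ c * y ^ 2 * (y * z ^ 3) := by rw [← h₁, pow_succ y 2]; ac_rfl
        _ = 0 := by rw [h₂, mul_zero]
    · obtain ⟨c, rfl⟩ : ∃ c', c = c' + 3 := ⟨c - 3, by omega⟩
      calc y ^ (b + 1) * z ^ (c + 3) = y ^ b * z ^ c * (y * z ^ 3) := by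
            rw [pow_succ, pow_add]; ac_rfl
        _ = 0 := by rw [h₂, mul_zero]
  · obtain ⟨b, rfl⟩ : ∃ b', b = b' + 3 := ⟨b - 3, by omega⟩
    have hshift : y ^ (b + 3) * z ^ c = y ^ b * z ^ (c + 4) := by
      rw [pow_add, h₁, pow_add]; ac_rfl
    rw [hshift]
    exact ih b (by omega) (c + 4)

theorem algebraMap_neg_inv_two_mul_two (K A : Type*) [Field K] [NeZero (2 : K)] [Ring A]
    [Algebra K A] : algebraMap K A (-2⁻¹) * 2 = -1 := by
  calc algebraMap K A (-2⁻¹) * 2 = algebraMap K A (-2⁻¹ * 2) := by rw [map_mul, map_ofNat]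
    _ = -1 := by rw [neg_mul, inv_mul_cancel₀ two_ne_zero, map_neg, map_one]

namespace S11T

variable (K : Type*) [Field K]

noncomputable def jacobianIdeal : Ideal (MvPolynomial (Fin 3) K) :=
  Ideal.span {2 * X 0 + X 1 ^ 2, 2 * X 0 * X 1 + X 2 ^ 4, X 1 * X 2 ^ 3}

abbrev MilnorRing : Type _ := MvPolynomial (Fin 3) K ⧸ jacobianIdeal K

noncomputable def curveParam : MvPolynomial (Fin 3) K →ₐ[K] Polynomial K :=
  aeval ![Polynomial.C (-2⁻¹) * Polynomial.X ^ 8, Polynomial.X ^ 4, Polynomial.X ^ 3]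

variable {K}

@[simp] theorem curveParam_X_zero : curveParam K (X 0) = Polynomial.C (-2⁻¹) * Polynomial.X ^ 8 :=
  aeval_X _ _

@[simp] theorem curveParam_X_one : curveParam K (X 1) = Polynomial.X ^ 4 := aeval_X _ _

@[simp] theorem curveParam_X_two : curveParam K (X 2) = Polynomial.X ^ 3 := aeval_X _ _

theorem curveParam_X_pow_mul_X_pow (b c : ℕ) :
    curveParam K (X 1 ^ b * X 2 ^ c) = Polynomial.X ^ (4 * b + 3 * c) := by
  simp [← pow_mul, pow_add]

theorem curveParam_mem_semigroupSubalgebra (f : MvPolynomial (Fin 3) K) :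
    curveParam K f ∈ Polynomial.semigroupSubalgebra semigroup34 := by
  refine eval₂_mem (fun _ _ => Subalgebra.algebraMap_mem _ _) fun i => ?_
  fin_cases i
  · exact Polynomial.C_mul_X_pow_mem_semigroupSubalgebra _ (mem_semigroup34.2 (by decide))
  · simpa using Polynomial.C_mul_X_pow_mem_semigroupSubalgebra (1 : K) (M := semigroup34)
      (n := 4) (mem_semigroup34.2 (by decide))
  · simpa using Polynomial.C_mul_X_pow_mem_semigroupSubalgebra (1 : K) (M := semigroup34)
      (n := 3) (mem_semigroup34.2 (by decide))

theorem mk_X_relations :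
    let x : MilnorRing K := Ideal.Quotient.mk _ (X 0)
    let y : MilnorRing K := Ideal.Quotient.mk _ (X 1)
    let z : MilnorRing K := Ideal.Quotient.mk _ (X 2)
    2 * x + y ^ 2 = 0 ∧ 2 * x * y + z ^ 4 = 0 ∧ y * z ^ 3 = 0 := by
  have hmk (g) (hg : g ∈ ({2 * X 0 + X 1 ^ 2, 2 * X 0 * X 1 + X 2 ^ 4, X 1 * X 2 ^ 3} :
      Set (MvPolynomial (Fin 3) K))) : Ideal.Quotient.mk (jacobianIdeal K) g = 0 :=
    Ideal.Quotient.eq_zero_iff_mem.2 (Ideal.subset_span hg)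
  intro x y z
  refine ⟨?_, ?_, ?_⟩
  · have h := hmk (2 * X 0 + X 1 ^ 2) (by simp)
    rwa [map_add, map_mul, map_pow, map_ofNat] at h
  · have h := hmk (2 * X 0 * X 1 + X 2 ^ 4) (by simp)
    rwa [map_add, map_mul, map_mul, map_pow, map_ofNat] at h
  · have h := hmk (X 1 * X 2 ^ 3) (by simp)
    rwa [map_mul, map_pow] at h

variable (K) in
noncomputable def staircaseMonomial (p : staircase) : MilnorRing K :=
  Ideal.Quotient.mkₐ K _ (X 1 ^ p.1.1 * X 2 ^ p.1.2)

variable [NeZero (2 : K)]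

theorem exists_curveParam_eq_mul_X_pow_of_mem {f : MvPolynomial (Fin 3) K}
    (hf : f ∈ jacobianIdeal K) : ∃ p, curveParam K f = curveParam K p * Polynomial.X ^ 13 := by
  simp only [jacobianIdeal, Ideal.mem_span_insert, Ideal.mem_span_singleton'] at hf
  obtain ⟨a, -, ⟨b, -, ⟨c, rfl⟩, rfl⟩, rfl⟩ := hf
  have h2 := algebraMap_neg_inv_two_mul_two K (Polynomial K)
  rw [Polynomial.algebraMap_eq] at h2
  refine ⟨c, ?_⟩
  simp only [map_add, map_mul, map_pow, map_ofNat, curveParam_X_zero, curveParam_X_one,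
    curveParam_X_two]
  linear_combination (curveParam K a * Polynomial.X ^ 8 + Polynomial.X ^ 12 * curveParam K b) * h2

theorem coeff_curveParam_eq_zero_of_mem {f : MvPolynomial (Fin 3) K} (hf : f ∈ jacobianIdeal K)
    {k : ℕ} (hk : ∀ m ∈ semigroup34, m + 13 ≠ k) : (curveParam K f).coeff k = 0 := by
  obtain ⟨p, hp⟩ := exists_curveParam_eq_mul_X_pow_of_mem hf
  rw [hp, Polynomial.coeff_mul_X_pow']
  split_ifs with h13
  · by_contra hne
    exact hk _ (curveParam_mem_semigroupSubalgebra p _ hne) (Nat.sub_add_cancel h13)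
  · rfl

theorem linearIndependent_staircaseMonomial : LinearIndependent K (staircaseMonomial K) := by
  rw [Fintype.linearIndependent_iff]
  intro g hg p
  set f : MvPolynomial (Fin 3) K := ∑ q : staircase, g q • (X 1 ^ q.1.1 * X 2 ^ q.1.2)
  have hf : f ∈ jacobianIdeal K := by
    rw [← Ideal.Quotient.eq_zero_iff_mem, ← hg, ← Ideal.Quotient.mkₐ_eq_mk K, map_sum]
    simp only [map_smul]
    rfl
  have hweight (q : staircase) : 4 * p.1.1 + 3 * p.1.2 = 4 * q.1.1 + 3 * q.1.2 ↔ p = q :=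
    (weight_injOn_staircase.eq_iff p.2 q.2).trans Subtype.ext_iff.symm
  calc g p = (curveParam K f).coeff (4 * p.1.1 + 3 * p.1.2) := by
        simp [f, map_sum, curveParam_X_pow_mul_X_pow, Polynomial.coeff_X_pow, hweight]
    _ = 0 := by
        refine coeff_curveParam_eq_zero_of_mem hf fun m hm => ?_
        have hp := p.2
        simp only [staircase, Finset.mem_filter, Finset.mem_product, Finset.mem_range] at hp
        rw [mem_semigroup34] at hm
        omega

theorem adjoin_mk_X_one_X_two :
    Algebra.adjoin K {Ideal.Quotient.mk (jacobianIdeal K) (X 1), Ideal.Quotient.mk _ (X 2)} = ⊤ := by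
  obtain ⟨hx, -, -⟩ := mk_X_relations (K := K)
  set A := Algebra.adjoin K {Ideal.Quotient.mk (jacobianIdeal K) (X 1), Ideal.Quotient.mk _ (X 2)}
  have hy : Ideal.Quotient.mk (jacobianIdeal K) (X 1) ∈ A := Algebra.subset_adjoin (by simp)
  have hz : Ideal.Quotient.mk (jacobianIdeal K) (X 2) ∈ A := Algebra.subset_adjoin (by simp)
  have hx' : Ideal.Quotient.mk (jacobianIdeal K) (X 0) =
      algebraMap K _ (-2⁻¹) * Ideal.Quotient.mk (jacobianIdeal K) (X 1) ^ 2 := by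
    linear_combination (-algebraMap K (MilnorRing K) (-2⁻¹)) * hx +
      Ideal.Quotient.mk (jacobianIdeal K) (X 0) * algebraMap_neg_inv_two_mul_two K (MilnorRing K)
  rw [eq_top_iff]
  rintro q -
  obtain ⟨f, rfl⟩ := Ideal.Quotient.mk_surjective q
  induction f using MvPolynomial.induction_on with
  | C a => exact A.algebraMap_mem a
  | add p q hp hq => rw [map_add]; exact A.add_mem hp hq
  | mul_X p i hp =>
    rw [map_mul]
    refine A.mul_mem hp ?_
    match i with
    | 0 => rw [hx']; exact A.mul_mem (A.algebraMap_mem _) (A.pow_mem hy 2)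
    | 1 => exact hy
    | 2 => exact hz

theorem span_staircaseMonomial : Submodule.span K (Set.range (staircaseMonomial K)) = ⊤ := by
  obtain ⟨hx, hxy, hyz⟩ := mk_X_relations (K := K)
  have hy3 : Ideal.Quotient.mk (jacobianIdeal K) (X 1) ^ 3 = Ideal.Quotient.mk _ (X 2) ^ 4 := by
    linear_combination Ideal.Quotient.mk (jacobianIdeal K) (X 1) * hx - hxy
  rw [eq_top_iff, ← Algebra.top_toSubmodule, ← adjoin_mk_X_one_X_two, Algebra.adjoin_eq_span,
    Submodule.span_le]
  rintro _ hm
  obtain ⟨b, c, rfl⟩ := (Submonoid.mem_closure_pair _ _ _).1 hm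
  rcases pow_mul_pow_eq_zero_or_mem_staircase hy3 hyz b c with h | ⟨p, hp, h⟩
  · rw [h]; exact zero_mem _
  · rw [h]; exact Submodule.subset_span ⟨⟨p, hp⟩, by simp [staircaseMonomial]⟩

variable (K) in
noncomputable def staircaseBasis : Module.Basis staircase K (MilnorRing K) :=
  .mk linearIndependent_staircaseMonomial span_staircaseMonomial.ge

theorem finrank_milnorRing : Module.finrank K (MilnorRing K) = 13 := by
  rw [Module.finrank_eq_card_basis (staircaseBasis K)]
  rfl

end S11T

theorem milnor_ring_S11T_dim :
    FiniteDimensional ℂ (MvPolynomial (Fin 3) ℂ ⧸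
      Ideal.span ({(2 : MvPolynomial (Fin 3) ℂ) * X 0 + X 1 ^ 2, 2 * X 0 * X 1 + X 2 ^ 4, X 1 * X 2 ^ 3} : Set (MvPolynomial (Fin 3) ℂ))) ∧
    Module.finrank ℂ (MvPolynomial (Fin 3) ℂ ⧸
      Ideal.span ({(2 : MvPolynomial (Fin 3) ℂ) * X 0 + X 1 ^ 2, 2 * X 0 * X 1 + X 2 ^ 4, X 1 * X 2 ^ 3} : Set (MvPolynomial (Fin 3) ℂ))) = 13 :=
  ⟨.of_basis (S11T.staircaseBasis ℂ), S11T.finrank_milnorRing⟩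
end

section
/- The quotient ring ℂ[X,Y]/(3X²Y + Y⁴, X³ + 4XY³) is a finite-dimensional ℂ-vector space of dimension 12. -/
/-!
Over any field `K` in which `11 ≠ 0`, the twelve monomials `x ^ a * y ^ b` with `a < 3`, `b < 4`
form a basis of `K[x, y] / (3x²y + y⁴, x³ + 4xy³)`.

They span: the relations give `x³ = -4xy³` and `y⁴ = -3x²y`, and
`11 x³y = 4x (3x²y + y⁴) - y (x³ + 4xy³) = 0`, hence also `xy⁴ = -3x³y = 0`; so multiplying one of
the twelve monomials by `x` or by `y` stays in their span.

They are linearly independent: the matrices by which `x` and `y` would act on `K¹²` if they were a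
basis commute and satisfy both relations, so they define a representation of the quotient on `K¹²`
in which `x ^ a * y ^ b` maps the basis vector of `1` to the basis vector of index `(a, b)`.
-/

open MvPolynomial

namespace MvPolynomial

variable {σ R A : Type*} [CommSemiring R] [Semiring A] [Algebra R A]

open scoped IsMulCommutative in
noncomputable def aevalOfCommute (f : σ → A) (hf : ∀ i j, Commute (f i) (f j)) :
    MvPolynomial σ R →ₐ[R] A :=
  haveI := Algebra.isMulCommutative_adjoin R (s := Set.range f) <| by
    rintro _ ⟨i, rfl⟩ _ ⟨j, rfl⟩
    exact hf i j
  (Algebra.adjoin R (Set.range f)).val.comp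
    (aeval fun i => ⟨f i, Algebra.subset_adjoin ⟨i, rfl⟩⟩)

@[simp]
theorem aevalOfCommute_X (f : σ → A) (hf : ∀ i j, Commute (f i) (f j)) (i : σ) :
    aevalOfCommute f hf (X i : MvPolynomial σ R) = f i := by
  simp [aevalOfCommute]

theorem span_range_eq_top_of_X_mul_mem {R ι : Type*} [CommRing R] {I : Ideal (MvPolynomial σ R)}
    (v : ι → MvPolynomial σ R ⧸ I) (h1 : 1 ∈ Submodule.span R (Set.range v))
    (hX : ∀ i k, Ideal.Quotient.mk I (X i) * v k ∈ Submodule.span R (Set.range v)) :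
    Submodule.span R (Set.range v) = ⊤ := by
  set M := Submodule.span R (Set.range v)
  have hXM (i : σ) : M ≤ M.comap (LinearMap.mulLeft R (Ideal.Quotient.mk I (X i))) :=
    Submodule.span_le.2 <| Set.range_subset_iff.2 (hX i)
  rw [eq_top_iff]
  rintro q -
  obtain ⟨p, rfl⟩ := Ideal.Quotient.mk_surjective q
  induction p using MvPolynomial.induction_on with
  | C a =>
    rw [← algebraMap_eq, Ideal.Quotient.mk_algebraMap, Algebra.algebraMap_eq_smul_one]
    exact M.smul_mem a h1
  | add p q hp hq => rw [map_add]; exact M.add_mem hp hq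
  | mul_X p i hp => rw [map_mul, mul_comm]; exact hXM i hp

end MvPolynomial

noncomputable section

namespace Z12

variable (K : Type*) [Field K]

abbrev jacobianIdeal : Ideal (MvPolynomial (Fin 2) K) :=
  Ideal.span {(3 : MvPolynomial (Fin 2) K) * X 0 ^ 2 * X 1 + X 1 ^ 4, X 0 ^ 3 + 4 * X 0 * X 1 ^ 3}

abbrev MilnorRing : Type _ := MvPolynomial (Fin 2) K ⧸ jacobianIdeal K

def x : MilnorRing K := Ideal.Quotient.mk _ (X 0)

def y : MilnorRing K := Ideal.Quotient.mk _ (X 1)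

def normalMonomial (p : Fin 3 × Fin 4) : MilnorRing K := x K ^ (p.1 : ℕ) * y K ^ (p.2 : ℕ)

theorem jacobian_relations :
    3 * x K ^ 2 * y K + y K ^ 4 = 0 ∧ x K ^ 3 + 4 * x K * y K ^ 3 = 0 := by
  constructor <;>
  · rw [x, y, ← map_pow, ← map_pow, ← map_ofNat (Ideal.Quotient.mk _), ← map_mul, ← map_mul,
      ← map_add, Ideal.Quotient.eq_zero_iff_mem]
    exact Ideal.subset_span (by simp)

variable {K}

theorem x_pow_three_mul_y (h11 : (11 : K) ≠ 0) : x K ^ 3 * y K = 0 := by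
  obtain ⟨hY, hX⟩ := jacobian_relations K
  have h : (11 : MilnorRing K) * (x K ^ 3 * y K) = 0 := by
    linear_combination 4 * x K * hY - y K * hX
  have hunit : IsUnit (11 : MilnorRing K) := by
    simpa only [map_ofNat] using (IsUnit.mk0 _ h11).map (algebraMap K (MilnorRing K))
  exact hunit.mul_right_eq_zero.1 h

theorem x_mul_y_pow_four (h11 : (11 : K) ≠ 0) : x K * y K ^ 4 = 0 := by
  linear_combination x K * (jacobian_relations K).1 - 3 * x_pow_three_mul_y h11

theorem pow_mul_pow_mem_span {a b : ℕ} (ha : a < 3) (hb : b < 4) :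
    x K ^ a * y K ^ b ∈ Submodule.span K (Set.range (normalMonomial K)) :=
  Submodule.subset_span ⟨(⟨a, ha⟩, ⟨b, hb⟩), rfl⟩

theorem x_mul_mem_span (h11 : (11 : K) ≠ 0) {a b : ℕ} (ha : a < 3) (hb : b < 4) :
    x K * (x K ^ a * y K ^ b) ∈ Submodule.span K (Set.range (normalMonomial K)) := by
  obtain ha | rfl : a < 2 ∨ a = 2 := by omega
  · rw [← mul_assoc, ← pow_succ']
    exact pow_mul_pow_mem_span (by omega) hb
  obtain _ | b := b
  · have h : x K * (x K ^ 2 * y K ^ 0) = -(4 • (x K ^ 1 * y K ^ 3)) := by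
      linear_combination (jacobian_relations K).2
    rw [h]
    exact neg_mem (nsmul_mem (pow_mul_pow_mem_span (by norm_num) (by norm_num)) 4)
  · have h : x K * (x K ^ 2 * y K ^ (b + 1)) = 0 := by
      linear_combination y K ^ b * x_pow_three_mul_y h11
    rw [h]
    exact zero_mem _

theorem y_mul_mem_span (h11 : (11 : K) ≠ 0) {a b : ℕ} (ha : a < 3) (hb : b < 4) :
    y K * (x K ^ a * y K ^ b) ∈ Submodule.span K (Set.range (normalMonomial K)) := by
  obtain hb | rfl : b < 3 ∨ b = 3 := by omega
  · rw [mul_left_comm, ← pow_succ']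
    exact pow_mul_pow_mem_span ha (by omega)
  obtain _ | a := a
  · have h : y K * (x K ^ 0 * y K ^ 3) = -(3 • (x K ^ 2 * y K ^ 1)) := by
      linear_combination (jacobian_relations K).1
    rw [h]
    exact neg_mem (nsmul_mem (pow_mul_pow_mem_span (by norm_num) (by norm_num)) 3)
  · have h : y K * (x K ^ (a + 1) * y K ^ 3) = 0 := by
      linear_combination x K ^ a * x_mul_y_pow_four h11
    rw [h]
    exact zero_mem _

theorem span_normalMonomial_eq_top (h11 : (11 : K) ≠ 0) :
    Submodule.span K (Set.range (normalMonomial K)) = ⊤ := by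
  refine span_range_eq_top_of_X_mul_mem _ ?_ fun i p => ?_
  · simpa using pow_mul_pow_mem_span (K := K) (a := 0) (b := 0) (by norm_num) (by norm_num)
  · fin_cases i
    · exact x_mul_mem_span h11 p.1.isLt p.2.isLt
    · exact y_mul_mem_span h11 p.1.isLt p.2.isLt

/- Multiplication by `x` and by `y` in the basis `x ^ a * y ^ b`, indexed by `(a, b)`; the two
entries off the shift pattern come from `x · x² = -4 xy³` and `y · y³ = -3 x²y`. -/
def mulXMat : Matrix (Fin 3 × Fin 4) (Fin 3 × Fin 4) ℤ := Matrix.of fun p q =>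
  if (p.1 : ℕ) = q.1 + 1 ∧ p.2 = q.2 then 1 else if p = (1, 3) ∧ q = (2, 0) then -4 else 0

def mulYMat : Matrix (Fin 3 × Fin 4) (Fin 3 × Fin 4) ℤ := Matrix.of fun p q =>
  if p.1 = q.1 ∧ (p.2 : ℕ) = q.2 + 1 then 1 else if p = (2, 1) ∧ q = (0, 3) then -3 else 0

theorem mulXMat_mul_mulYMat_comm : mulXMat * mulYMat = mulYMat * mulXMat := by
  decide

theorem mulMat_jacobian_relations :
    3 * mulXMat ^ 2 * mulYMat + mulYMat ^ 4 = 0 ∧ mulXMat ^ 3 + 4 * mulXMat * mulYMat ^ 3 = 0 := by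
  decide

theorem col_mulXMat_pow_mul_mulYMat_pow (p : Fin 3 × Fin 4) :
    (mulXMat ^ (p.1 : ℕ) * mulYMat ^ (p.2 : ℕ)).col 0 = Pi.single p 1 := by
  revert p
  decide

variable (K)

abbrev castMat :
    Matrix (Fin 3 × Fin 4) (Fin 3 × Fin 4) ℤ →+* Matrix (Fin 3 × Fin 4) (Fin 3 × Fin 4) K :=
  (Int.castRingHom K).mapMatrix

theorem commute_castMat : Commute (castMat K mulXMat) (castMat K mulYMat) := by
  simpa only [Commute, SemiconjBy, map_mul] using congrArg (castMat K) mulXMat_mul_mulYMat_comm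

theorem castMat_jacobian_relations :
    3 * castMat K mulXMat ^ 2 * castMat K mulYMat + castMat K mulYMat ^ 4 = 0 ∧
      castMat K mulXMat ^ 3 + 4 * castMat K mulXMat * castMat K mulYMat ^ 3 = 0 := by
  obtain ⟨h₁, h₂⟩ := mulMat_jacobian_relations
  simpa only [map_add, map_mul, map_pow, map_ofNat, map_zero] using
    And.intro (congrArg (castMat K) h₁) (congrArg (castMat K) h₂)

def evalMulMat : MvPolynomial (Fin 2) K →ₐ[K] Matrix (Fin 3 × Fin 4) (Fin 3 × Fin 4) K :=
  aevalOfCommute ![castMat K mulXMat, castMat K mulYMat] fun i j => by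
    fin_cases i <;> fin_cases j
    exacts [.refl _, commute_castMat K, (commute_castMat K).symm, .refl _]

theorem jacobianIdeal_le_ker_evalMulMat : jacobianIdeal K ≤ RingHom.ker (evalMulMat K) := by
  rw [Ideal.span_le]
  rintro _ (rfl | rfl) <;>
    simp only [SetLike.mem_coe, RingHom.mem_ker, evalMulMat, map_add, map_mul, map_pow, map_ofNat,
      aevalOfCommute_X]
  exacts [(castMat_jacobian_relations K).1, (castMat_jacobian_relations K).2]

def regularRep : MilnorRing K →ₐ[K] Matrix (Fin 3 × Fin 4) (Fin 3 × Fin 4) K :=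
  Ideal.Quotient.liftₐ _ (evalMulMat K) fun _ hp => jacobianIdeal_le_ker_evalMulMat K hp

theorem regularRep_x : regularRep K (x K) = castMat K mulXMat := by
  show evalMulMat K (X 0) = _
  simp [evalMulMat]

theorem regularRep_y : regularRep K (y K) = castMat K mulYMat := by
  show evalMulMat K (X 1) = _
  simp [evalMulMat]

theorem col_regularRep_normalMonomial (p : Fin 3 × Fin 4) :
    (regularRep K (normalMonomial K p)).col 0 = Pi.single p 1 := by
  have h : regularRep K (normalMonomial K p) =
      castMat K (mulXMat ^ (p.1 : ℕ) * mulYMat ^ (p.2 : ℕ)) := by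
    simp only [normalMonomial, map_mul, map_pow, regularRep_x, regularRep_y]
  ext r
  simpa [h, Pi.single_apply] using
    congrArg (Int.cast : ℤ → K) (congrFun (col_mulXMat_pow_mul_mulYMat_pow p) r)

theorem linearIndependent_normalMonomial : LinearIndependent K (normalMonomial K) := by
  refine .of_comp (LinearMap.applyₗ (Pi.single 0 1) ∘ₗ Matrix.toLin'.toLinearMap ∘ₗ
    (regularRep K).toLinearMap) ?_
  convert (Pi.basisFun K (Fin 3 × Fin 4)).linearIndependent
  ext p : 1
  simp [col_regularRep_normalMonomial]

def normalMonomialBasis (h11 : (11 : K) ≠ 0) : Module.Basis (Fin 3 × Fin 4) K (MilnorRing K) :=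
  .mk (linearIndependent_normalMonomial K) (span_normalMonomial_eq_top h11).ge

end Z12

end

theorem milnor_ring_Z12_dim :
    FiniteDimensional ℂ (MvPolynomial (Fin 2) ℂ ⧸
      Ideal.span ({(3 : MvPolynomial (Fin 2) ℂ) * X 0 ^ 2 * X 1 + X 1 ^ 4, X 0 ^ 3 + 4 * X 0 * X 1 ^ 3} : Set (MvPolynomial (Fin 2) ℂ))) ∧
    Module.finrank ℂ (MvPolynomial (Fin 2) ℂ ⧸
      Ideal.span ({(3 : MvPolynomial (Fin 2) ℂ) * X 0 ^ 2 * X 1 + X 1 ^ 4, X 0 ^ 3 + 4 * X 0 * X 1 ^ 3} : Set (MvPolynomial (Fin 2) ℂ))) = 12 := by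
  have b := Z12.normalMonomialBasis ℂ (by norm_num)
  exact ⟨.of_basis b, by simp [Module.finrank_eq_card_basis b]⟩
end

section
/- The quotient ring ℂ[X,Y]/(3X² + Y⁸, 8XY⁷) is a finite-dimensional ℂ-vector space of dimension 22. -/
/-!
Eliminate `x`: over `R = ℂ[y]`, the ring `R[x]/(x² + y⁸/3)` is free with basis `1, x`, and
multiplication by the second generator `x y⁷` acts on coordinates by
`(p, q) ↦ (-y¹⁵ q / 3, y⁷ p)`. Its image is `(y¹⁵) ⊕ (y⁷)`, so the Milnor ring is
`ℂ[y]/(y¹⁵) ⊕ ℂ[y]/(y⁷)`, of dimension `15 + 7 = 22`.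
-/

open MvPolynomial

open scoped Polynomial

theorem Ideal.span_pair_mul_left_units {α : Type*} [CommSemiring α] {u v : α} (hu : IsUnit u)
    (hv : IsUnit v) (x y : α) : Ideal.span {u * x, v * y} = Ideal.span {x, y} := by
  rw [Ideal.span_insert, Ideal.span_insert, Ideal.span_singleton_mul_left_unit hu,
    Ideal.span_singleton_mul_left_unit hv]

namespace AdjoinRoot

variable {R : Type*} [CommRing R] (c : R)

noncomputable def quadraticBasis [Nontrivial R] :
    Module.Basis (Fin 2) R (AdjoinRoot (Polynomial.X ^ 2 + Polynomial.C c)) :=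
  (powerBasis' (Polynomial.monic_X_pow_add_C c two_ne_zero)).basis.reindex
    (finCongr Polynomial.natDegree_X_pow_add_C)

theorem quadraticBasis_apply [Nontrivial R] (i : Fin 2) :
    quadraticBasis c i = root (Polynomial.X ^ 2 + Polynomial.C c) ^ (i : ℕ) := by
  simp [quadraticBasis]
  rfl

theorem quadraticBasis_equivFun_symm [Nontrivial R] (v : Fin 2 → R) :
    (quadraticBasis c).equivFun.symm v =
      v 0 • 1 + v 1 • root (Polynomial.X ^ 2 + Polynomial.C c) := by
  simp [Module.Basis.equivFun_symm_apply, Fin.sum_univ_two, quadraticBasis_apply]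

theorem exists_eq_smul_one_add_smul_root [Nontrivial R]
    (x : AdjoinRoot (Polynomial.X ^ 2 + Polynomial.C c)) :
    ∃ p q : R, x = p • 1 + q • root (Polynomial.X ^ 2 + Polynomial.C c) :=
  ⟨_, _, by rw [← quadraticBasis_equivFun_symm, LinearEquiv.symm_apply_apply]⟩

theorem smul_one_add_smul_root_inj [Nontrivial R] {p q p' q' : R} :
    p • 1 + q • root (Polynomial.X ^ 2 + Polynomial.C c) =
        p' • 1 + q' • root (Polynomial.X ^ 2 + Polynomial.C c) ↔ p = p' ∧ q = q' := by
  simpa [Module.Basis.equivFun_symm_apply, Fin.sum_univ_two, quadraticBasis_apply, funext_iff,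
    Fin.forall_fin_two] using
    (quadraticBasis c).equivFun.symm.injective.eq_iff (a := ![p, q]) (b := ![p', q'])

theorem root_sq_of_X_sq_add_C : root (Polynomial.X ^ 2 + Polynomial.C c) ^ 2 = -of _ c := by
  have h := mk_self (f := Polynomial.X ^ 2 + Polynomial.C c)
  rw [map_add, map_pow, mk_X, mk_C] at h
  exact eq_neg_of_add_eq_zero_left h

theorem smul_one_add_smul_root_mul_root_mul_of (p q a : R) :
    (p • 1 + q • root (Polynomial.X ^ 2 + Polynomial.C c)) * (root _ * of _ a) =
      (-(a * c * q)) • 1 + (a * p) • root (Polynomial.X ^ 2 + Polynomial.C c) := by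
  simp only [Algebra.smul_def, algebraMap_eq, mul_one, map_neg, map_mul]
  linear_combination (of _ a * of _ q) * root_sq_of_X_sq_add_C c

theorem smul_one_add_smul_root_mem_span_root_mul_of_iff [Nontrivial R] (p q a : R) :
    p • 1 + q • root (Polynomial.X ^ 2 + Polynomial.C c) ∈ Ideal.span {root _ * of _ a} ↔
      a * c ∣ p ∧ a ∣ q := by
  rw [Ideal.mem_span_singleton']
  constructor
  · rintro ⟨s, hs⟩
    obtain ⟨u, w, rfl⟩ := exists_eq_smul_one_add_smul_root c s
    rw [smul_one_add_smul_root_mul_root_mul_of, smul_one_add_smul_root_inj] at hs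
    obtain ⟨rfl, rfl⟩ := hs
    exact ⟨⟨-w, by ring⟩, dvd_mul_right a u⟩
  · rintro ⟨⟨u, rfl⟩, ⟨w, rfl⟩⟩
    exact ⟨w • 1 + (-u) • root _, by
      rw [smul_one_add_smul_root_mul_root_mul_of, smul_one_add_smul_root_inj]
      constructor <;> ring⟩

theorem map_equivFun_span_root_mul_of [Nontrivial R] (a : R) :
    ((Ideal.span {root (Polynomial.X ^ 2 + Polynomial.C c) * of _ a}).restrictScalars R).map
        ((quadraticBasis c).equivFun : _ →ₗ[R] Fin 2 → R) =
      Submodule.pi Set.univ fun i ↦ Ideal.span {![a * c, a] i} := by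
  ext v
  simp only [Submodule.map_equiv_eq_comap_symm, Submodule.mem_comap, LinearEquiv.coe_coe,
    quadraticBasis_equivFun_symm, Submodule.restrictScalars_mem,
    smul_one_add_smul_root_mem_span_root_mul_of_iff, Submodule.mem_pi, Set.mem_univ, true_implies,
    Fin.forall_fin_two, Matrix.cons_val_zero, Matrix.cons_val_one]
  simp only [Ideal.mem_span_singleton]

noncomputable def quotientSpanRootMulOfEquiv [Nontrivial R] (a : R) :
    (AdjoinRoot (Polynomial.X ^ 2 + Polynomial.C c) ⧸ Ideal.span {root _ * of _ a}) ≃ₗ[R]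
      Π i, R ⧸ Ideal.span {![a * c, a] i} :=
  (Submodule.Quotient.restrictScalarsEquiv R _).symm ≪≫ₗ
    Submodule.Quotient.equiv _ _ (quadraticBasis c).equivFun
      (map_equivFun_span_root_mul_of c a) ≪≫ₗ
    Submodule.quotientPi _

end AdjoinRoot

namespace Polynomial

variable {R : Type*} [CommRing R]

noncomputable def quotientSpanXSqAddCXMulCEquiv [Nontrivial R] (c a : R) :
    (R[X] ⧸ Ideal.span {X ^ 2 + C c, X * C a}) ≃ₗ[R]
      Π i, R ⧸ Ideal.span {![a * c, a] i} :=
  have hspan : (Ideal.span {X * C a}).map (Ideal.Quotient.mkₐ R (Ideal.span {X ^ 2 + C c})) =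
      Ideal.span {AdjoinRoot.root _ * AdjoinRoot.of _ a} := by
    rw [Ideal.map_span, Set.image_singleton]
    rfl
  ((Ideal.quotientEquivAlgOfEq R (Ideal.span_insert _ _)).trans
    ((DoubleQuot.quotQuotEquivQuotSupₐ R _ _).symm.trans
      (Ideal.quotientEquivAlgOfEq R hspan))).toLinearEquiv ≪≫ₗ
    AdjoinRoot.quotientSpanRootMulOfEquiv c a

variable {K : Type*} [Field K]

theorem finite_quotient_span_singleton {p : K[X]} (hp : p ≠ 0) :
    Module.Finite K (K[X] ⧸ Ideal.span {p}) :=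
  (AdjoinRoot.powerBasis hp).finite

theorem finrank_quotient_span_X_sq_add_C_X_mul_C {c a : K[X]} (hc : c ≠ 0) (ha : a ≠ 0) :
    Module.finrank K (K[X][X] ⧸ Ideal.span {X ^ 2 + C c, X * C a}) =
      c.natDegree + 2 * a.natDegree := by
  have hne : ∀ i, ![a * c, a] i ≠ 0 := by
    simpa [Fin.forall_fin_two] using ⟨⟨ha, hc⟩, ha⟩
  have := fun i ↦ finite_quotient_span_singleton (hne i)
  rw [((quotientSpanXSqAddCXMulCEquiv c a).restrictScalars K).finrank_eq,
    Module.finrank_pi_fintype]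
  simp only [finrank_quotient_span_eq_natDegree, Fin.sum_univ_two, Matrix.cons_val_zero,
    Matrix.cons_val_one, natDegree_mul ha hc]
  ring

end Polynomial

namespace MvPolynomial

variable (R : Type*) [CommSemiring R]

noncomputable def finTwoEquiv : MvPolynomial (Fin 2) R ≃ₐ[R] R[X][X] :=
  (finSuccEquiv R 1).trans (Polynomial.mapAlgEquiv (uniqueAlgEquiv R (Fin 1)))

@[simp]
theorem finTwoEquiv_X_zero : finTwoEquiv R (X 0) = Polynomial.X := by
  simp [finTwoEquiv, finSuccEquiv_X_zero]

@[simp]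
theorem finTwoEquiv_X_one : finTwoEquiv R (X 1) = Polynomial.C Polynomial.X := by
  rw [finTwoEquiv, AlgEquiv.trans_apply, show (X 1 : MvPolynomial (Fin 2) R) = X (Fin.succ 0)
    from rfl, finSuccEquiv_X_succ]
  simp

@[simp]
theorem finTwoEquiv_C (r : R) : finTwoEquiv R (C r) = Polynomial.C (Polynomial.C r) := by
  simpa [Polynomial.algebraMap_apply] using (finTwoEquiv R).commutes r

variable {K : Type*} [Field K]

theorem finrank_quotient_span_C_mul_X_sq_add_X_pow {u v : K} (hu : u ≠ 0) (hv : v ≠ 0)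
    (m n : ℕ) :
    Module.finrank K (MvPolynomial (Fin 2) K ⧸
      Ideal.span {C u * X 0 ^ 2 + X 1 ^ m, C v * X 0 * X 1 ^ n}) = m + 2 * n := by
  have h₁ : finTwoEquiv K (C u * X 0 ^ 2 + X 1 ^ m) = Polynomial.C (Polynomial.C u) *
      (Polynomial.X ^ 2 + Polynomial.C (Polynomial.C u⁻¹ * Polynomial.X ^ m)) := by
    have hCu :
        (Polynomial.C (Polynomial.C u) * Polynomial.C (Polynomial.C u⁻¹) : K[X][X]) = 1 := by
      rw [← map_mul, ← map_mul, mul_inv_cancel₀ hu, map_one, map_one]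
    simp only [map_add, map_mul, map_pow, finTwoEquiv_C, finTwoEquiv_X_zero, finTwoEquiv_X_one]
    linear_combination (-(Polynomial.C Polynomial.X ^ m : K[X][X])) * hCu
  have h₂ : finTwoEquiv K (C v * X 0 * X 1 ^ n) = Polynomial.C (Polynomial.C v) *
      (Polynomial.X * Polynomial.C (Polynomial.X ^ n)) := by
    simp [mul_assoc]
  have hI : (Ideal.span {C u * X 0 ^ 2 + X 1 ^ m, C v * X 0 * X 1 ^ n}).map (finTwoEquiv K) =
      Ideal.span {Polynomial.X ^ 2 + Polynomial.C (Polynomial.C u⁻¹ * Polynomial.X ^ m),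
        Polynomial.X * Polynomial.C (Polynomial.X ^ n)} := by
    rw [Ideal.map_span, Set.image_pair, h₁, h₂]
    exact Ideal.span_pair_mul_left_units ((hu.isUnit.map Polynomial.C).map Polynomial.C)
      ((hv.isUnit.map Polynomial.C).map Polynomial.C) _ _
  rw [(Ideal.quotientEquivAlg _ _ (finTwoEquiv K) hI.symm).toLinearEquiv.finrank_eq,
    Polynomial.finrank_quotient_span_X_sq_add_C_X_mul_C
      (mul_ne_zero (Polynomial.C_ne_zero.mpr (inv_ne_zero hu))
        (pow_ne_zero m Polynomial.X_ne_zero))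
      (pow_ne_zero n Polynomial.X_ne_zero),
    Polynomial.natDegree_C_mul_X_pow _ _ (inv_ne_zero hu), Polynomial.natDegree_X_pow]

end MvPolynomial

theorem milnor_ring_Z17T_dim :
    FiniteDimensional ℂ (MvPolynomial (Fin 2) ℂ ⧸
      Ideal.span ({(3 : MvPolynomial (Fin 2) ℂ) * X 0 ^ 2 + X 1 ^ 8, 8 * X 0 * X 1 ^ 7} : Set (MvPolynomial (Fin 2) ℂ))) ∧
    Module.finrank ℂ (MvPolynomial (Fin 2) ℂ ⧸
      Ideal.span ({(3 : MvPolynomial (Fin 2) ℂ) * X 0 ^ 2 + X 1 ^ 8, 8 * X 0 * X 1 ^ 7} : Set (MvPolynomial (Fin 2) ℂ))) = 22 := by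
  have hdim := finrank_quotient_span_C_mul_X_sq_add_X_pow (K := ℂ) (u := 3) (v := 8)
    three_ne_zero (by norm_num) 8 7
  rw [map_ofNat, map_ofNat] at hdim
  exact ⟨Module.finite_of_finrank_pos (by rw [hdim]; norm_num), hdim⟩
end

section
/- The quotient ring ℂ[X,Y]/(3X²Y + Y⁶, X³ + 6XY⁵) is a finite-dimensional ℂ-vector space of dimension 18. -/
/-!
In `K[x, y]` modulo `f = 3x²y + y⁶` and `g = x³ + 6xy⁵`, the relations `x³ ≡ -6xy⁵` and
`x²y ≡ -y⁶/3` lower the `x`-degree, while `17xy⁶ = 3y·g - x·f` and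
`17y¹¹ = (17y⁵ + 3x²)·f - 9xy·g` kill `xy⁶` and `y¹¹`. So the 18 monomials `y^b` (`b < 11`),
`xy^b` (`b < 6`) and `x²` span the quotient. They are independent because reducing monomials by
these rules defines a linear normal-form map `K[x, y] → K¹⁸` that vanishes on every multiple
`x^a y^b f` and `x^a y^b g`, hence on the ideal.
-/

open MvPolynomial

section NormalForm

variable {K R V : Type*} [CommRing K] [CommRing R] [Algebra K R] [AddCommGroup V] [Module K V]

noncomputable def Ideal.quotientEquivOfNormalForm (I : Ideal R) (N : R →ₗ[K] V) (s : V →ₗ[K] R)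
    (hN : ∀ p ∈ I, N p = 0) (hNs : ∀ v, N (s v) = v)
    (hsN : ∀ p, Ideal.Quotient.mkₐ K I (s (N p)) = Ideal.Quotient.mkₐ K I p) :
    (R ⧸ I) ≃ₗ[K] V :=
  have hker : I.restrictScalars K = LinearMap.ker N := by
    ext p
    refine ⟨hN p, fun hp => ?_⟩
    have h := hsN p
    rw [LinearMap.mem_ker.mp hp, map_zero, map_zero, eq_comm, Ideal.Quotient.mkₐ_eq_mk,
      Ideal.Quotient.eq_zero_iff_mem] at h
    exact h
  (Submodule.Quotient.restrictScalarsEquiv K I).symm ≪≫ₗ Submodule.quotEquivOfEq _ _ hker ≪≫ₗ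
    N.quotKerEquivOfSurjective fun v => ⟨s v, hNs v⟩

end NormalForm

namespace MvPolynomial

variable {R M : Type*} [CommSemiring R] [AddCommMonoid M] [Module R M]

theorem monomial_one_eq_X_zero_pow_mul_X_one_pow (m : Fin 2 →₀ ℕ) :
    monomial m (1 : R) = X 0 ^ m 0 * X 1 ^ m 1 := by
  rw [monomial_eq, C_1, one_mul, Finsupp.prod_fintype _ _ fun _ => pow_zero _, Fin.prod_univ_two]

theorem linearMap_ext_X_zero_pow_mul_X_one_pow {f g : MvPolynomial (Fin 2) R →ₗ[R] M}
    (h : ∀ a b, f (X 0 ^ a * X 1 ^ b) = g (X 0 ^ a * X 1 ^ b)) : f = g :=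
  (basisMonomials (Fin 2) R).ext fun m => by
    simp only [coe_basisMonomials, monomial_one_eq_X_zero_pow_mul_X_one_pow, h]

theorem linearMap_eq_zero_of_mem_span {N : MvPolynomial (Fin 2) R →ₗ[R] M}
    {S : Set (MvPolynomial (Fin 2) R)} (hS : ∀ q ∈ S, ∀ a b, N (X 0 ^ a * X 1 ^ b * q) = 0)
    {p : MvPolynomial (Fin 2) R} (hp : p ∈ Ideal.span S) : N p = 0 := by
  suffices h : ∀ r, N (r * p) = 0 by simpa using h 1
  induction hp using Submodule.span_induction with
  | mem q hq =>
    intro r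
    exact LinearMap.congr_fun (linearMap_ext_X_zero_pow_mul_X_one_pow
      (f := N ∘ₗ LinearMap.mulRight R q) (g := 0) (by simpa using hS q hq)) r
  | zero => simp
  | add p q _ _ hp hq => intro r; rw [mul_add, map_add, hp, hq, add_zero]
  | smul c p _ hp => intro r; rw [smul_eq_mul, ← mul_assoc, hp]

end MvPolynomial

namespace Z18

open Finset

noncomputable def jacobianIdeal (K : Type*) [Field K] : Ideal (MvPolynomial (Fin 2) K) :=
  Ideal.span {(3 : MvPolynomial (Fin 2) K) * X 0 ^ 2 * X 1 + X 1 ^ 6, X 0 ^ 3 + 6 * X 0 * X 1 ^ 5}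

variable {K : Type*} [Field K]

local notation "mk" => Ideal.Quotient.mkₐ K (jacobianIdeal K)

theorem mk_eq_mk_of_sub_eq {p q : MvPolynomial (Fin 2) K} (u v : MvPolynomial (Fin 2) K)
    (h : p - q = u * (3 * X 0 ^ 2 * X 1 + X 1 ^ 6) + v * (X 0 ^ 3 + 6 * X 0 * X 1 ^ 5)) :
    mk p = mk q := by
  rw [Ideal.Quotient.mkₐ_eq_mk, Ideal.Quotient.eq]
  exact Ideal.mem_span_pair.mpr ⟨u, v, h.symm⟩

theorem mk_eq_zero_of_seventeen_mul [CharZero K] {p : MvPolynomial (Fin 2) K}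
    (u v : MvPolynomial (Fin 2) K)
    (h : 17 * p = u * (3 * X 0 ^ 2 * X 1 + X 1 ^ 6) + v * (X 0 ^ 3 + 6 * X 0 * X 1 ^ 5)) :
    mk p = 0 := by
  have h17 : (17 : K) • mk p = 0 := by
    rw [← map_smul, smul_eq_C_mul, map_ofNat, ← map_zero mk]
    exact mk_eq_mk_of_sub_eq u v (by rw [sub_zero, h])
  exact (smul_eq_zero.mp h17).resolve_left (by norm_num)

theorem mk_X_one_pow_add_eleven [CharZero K] (b : ℕ) :
    mk (X 1 ^ (b + 11) : MvPolynomial (Fin 2) K) = 0 :=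
  mk_eq_zero_of_seventeen_mul ((17 * X 1 ^ 5 + 3 * X 0 ^ 2) * X 1 ^ b) (-9 * X 0 * X 1 ^ (b + 1))
    (by ring)

theorem mk_X_zero_mul_X_one_pow_add_six [CharZero K] (b : ℕ) :
    mk (X 0 * X 1 ^ (b + 6) : MvPolynomial (Fin 2) K) = 0 :=
  mk_eq_zero_of_seventeen_mul (-X 0 * X 1 ^ b) (3 * X 1 ^ (b + 1)) (by ring)

theorem mk_X_zero_sq_mul_X_one_pow_succ [CharZero K] (b : ℕ) :
    mk (X 0 ^ 2 * X 1 ^ (b + 1) : MvPolynomial (Fin 2) K) = (-3 : K)⁻¹ • mk (X 1 ^ (b + 6)) := by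
  rw [eq_inv_smul_iff₀ (by norm_num), ← map_smul, smul_eq_C_mul, map_neg, map_ofNat]
  exact mk_eq_mk_of_sub_eq (-X 1 ^ b) 0 (by ring)

theorem mk_X_zero_pow_add_three_mul [CharZero K] (a b : ℕ) :
    mk (X 0 ^ (a + 3) * X 1 ^ b : MvPolynomial (Fin 2) K) =
      (-6 : K) • mk (X 0 ^ (a + 1) * X 1 ^ (b + 5)) := by
  rw [← map_smul, smul_eq_C_mul, map_neg, map_ofNat]
  exact mk_eq_mk_of_sub_eq 0 (X 0 ^ a * X 1 ^ b) (by ring)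

def milnorExponents : Finset (ℕ × ℕ) :=
  (range 11).image (0, ·) ∪ (range 6).image (1, ·) ∪ {(2, 0)}

noncomputable def normalForm : ℕ → ℕ → milnorExponents → K
  | 0, b => if h : b < 11 then Pi.single ⟨(0, b), by simp [milnorExponents, h]⟩ 1 else 0
  | 1, b => if h : b < 6 then Pi.single ⟨(1, b), by simp [milnorExponents, h]⟩ 1 else 0
  | 2, 0 => Pi.single ⟨(2, 0), by simp [milnorExponents]⟩ 1
  | 2, b + 1 => (-3 : K)⁻¹ • normalForm 0 (b + 6)
  | a + 3, b => (-6 : K) • normalForm (a + 1) (b + 5)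

theorem normalForm_zero_add_eleven (b : ℕ) :
    normalForm 0 (b + 11) = (0 : milnorExponents → K) := by
  rw [normalForm, dif_neg (by omega)]

theorem normalForm_succ_add_six :
    ∀ a b : ℕ, normalForm (a + 1) (b + 6) = (0 : milnorExponents → K)
  | 0, b => by rw [normalForm, dif_neg (by omega)]
  | 1, b => by rw [normalForm, normalForm_zero_add_eleven, smul_zero]
  | a + 2, b => by rw [normalForm, normalForm_succ_add_six a (b + 5), smul_zero]

theorem normalForm_of_mem {e : ℕ × ℕ} (he : e ∈ milnorExponents) :
    normalForm e.1 e.2 = (Pi.single ⟨e, he⟩ 1 : milnorExponents → K) := by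
  simp only [milnorExponents, mem_union, mem_image, mem_range, mem_singleton] at he
  rcases he with (⟨b, hb, rfl⟩ | ⟨b, hb, rfl⟩) | rfl
  · rw [normalForm, dif_pos hb]
  · rw [normalForm, dif_pos hb]
  · rw [normalForm]

theorem three_smul_normalForm_add_normalForm [CharZero K] (a b : ℕ) :
    (3 : K) • normalForm (a + 2) (b + 1) + normalForm a (b + 6) = (0 : milnorExponents → K) := by
  rcases a with _ | a
  · rw [zero_add, normalForm.eq_4, smul_smul]
    norm_num
  · rw [normalForm, normalForm_succ_add_six, smul_zero, smul_zero, zero_add]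

theorem normalForm_add_six_smul_normalForm (a b : ℕ) :
    normalForm (a + 3) b + (6 : K) • normalForm (a + 1) (b + 5) = (0 : milnorExponents → K) := by
  rw [normalForm, neg_smul, neg_add_cancel]

noncomputable def normalFormMap : MvPolynomial (Fin 2) K →ₗ[K] milnorExponents → K :=
  (basisMonomials (Fin 2) K).constr K fun m => normalForm (m 0) (m 1)

noncomputable def ofCoeffs : (milnorExponents → K) →ₗ[K] MvPolynomial (Fin 2) K :=
  Fintype.linearCombination K fun e => X 0 ^ e.1.1 * X 1 ^ e.1.2

theorem normalFormMap_X_zero_pow_mul_X_one_pow (a b : ℕ) :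
    normalFormMap (X 0 ^ a * X 1 ^ b : MvPolynomial (Fin 2) K) = normalForm a b := by
  have hm : monomial (Finsupp.single 0 a + Finsupp.single 1 b) (1 : K) =
      (X 0 ^ a * X 1 ^ b : MvPolynomial (Fin 2) K) := by
    rw [monomial_one_eq_X_zero_pow_mul_X_one_pow]
    simp
  rw [normalFormMap, ← hm]
  exact ((basisMonomials (Fin 2) K).constr_basis K _ _).trans (by simp)

theorem ofCoeffs_single (e : milnorExponents) :
    ofCoeffs (Pi.single e (1 : K)) = X 0 ^ e.1.1 * X 1 ^ e.1.2 := by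
  rw [ofCoeffs, Fintype.linearCombination_apply_single, one_smul]

theorem normalFormMap_ofCoeffs (v : milnorExponents → K) : normalFormMap (ofCoeffs v) = v := by
  refine LinearMap.congr_fun ((Pi.basisFun K milnorExponents).ext
    (f₁ := normalFormMap ∘ₗ ofCoeffs) (f₂ := LinearMap.id) fun e => ?_) v
  rw [LinearMap.comp_apply, Pi.basisFun_apply, ofCoeffs_single,
    normalFormMap_X_zero_pow_mul_X_one_pow, normalForm_of_mem e.2, LinearMap.id_apply]

theorem normalFormMap_eq_zero_of_mem [CharZero K] {p : MvPolynomial (Fin 2) K}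
    (hp : p ∈ jacobianIdeal K) : normalFormMap p = 0 := by
  refine linearMap_eq_zero_of_mem_span (fun q hq a b => ?_) hp
  rcases hq with rfl | rfl
  · rw [show (X 0 ^ a * X 1 ^ b * (3 * X 0 ^ 2 * X 1 + X 1 ^ 6) : MvPolynomial (Fin 2) K) =
        (3 : K) • (X 0 ^ (a + 2) * X 1 ^ (b + 1)) + X 0 ^ a * X 1 ^ (b + 6) by
      rw [smul_eq_C_mul, map_ofNat]; ring]
    rw [map_add, map_smul, normalFormMap_X_zero_pow_mul_X_one_pow,
      normalFormMap_X_zero_pow_mul_X_one_pow, three_smul_normalForm_add_normalForm]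
  · rw [show (X 0 ^ a * X 1 ^ b * (X 0 ^ 3 + 6 * X 0 * X 1 ^ 5) : MvPolynomial (Fin 2) K) =
        X 0 ^ (a + 3) * X 1 ^ b + (6 : K) • (X 0 ^ (a + 1) * X 1 ^ (b + 5)) by
      rw [smul_eq_C_mul, map_ofNat]; ring]
    rw [map_add, map_smul, normalFormMap_X_zero_pow_mul_X_one_pow,
      normalFormMap_X_zero_pow_mul_X_one_pow, normalForm_add_six_smul_normalForm]

theorem mk_ofCoeffs_normalForm [CharZero K] :
    ∀ a b, mk (ofCoeffs (normalForm a b)) = mk (X 0 ^ a * X 1 ^ b : MvPolynomial (Fin 2) K)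
  | 0, b => by
    by_cases h : b < 11
    · rw [normalForm, dif_pos h, ofCoeffs_single]
    · obtain ⟨c, rfl⟩ : ∃ c, b = c + 11 := ⟨b - 11, by omega⟩
      rw [normalForm, dif_neg h, map_zero, map_zero, pow_zero, one_mul, mk_X_one_pow_add_eleven]
  | 1, b => by
    by_cases h : b < 6
    · rw [normalForm, dif_pos h, ofCoeffs_single]
    · obtain ⟨c, rfl⟩ : ∃ c, b = c + 6 := ⟨b - 6, by omega⟩
      rw [normalForm, dif_neg h, map_zero, map_zero, pow_one, mk_X_zero_mul_X_one_pow_add_six]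
  | 2, 0 => by rw [normalForm, ofCoeffs_single]
  | 2, b + 1 => by
    rw [normalForm, map_smul, map_smul, mk_ofCoeffs_normalForm 0 (b + 6),
      mk_X_zero_sq_mul_X_one_pow_succ, pow_zero, one_mul]
  | a + 3, b => by
    rw [normalForm, map_smul, map_smul, mk_ofCoeffs_normalForm (a + 1) (b + 5),
      mk_X_zero_pow_add_three_mul]

theorem mk_ofCoeffs_normalFormMap [CharZero K] (p : MvPolynomial (Fin 2) K) :
    mk (ofCoeffs (normalFormMap p)) = mk p :=
  LinearMap.congr_fun (linearMap_ext_X_zero_pow_mul_X_one_pow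
    (f := (mk).toLinearMap ∘ₗ ofCoeffs ∘ₗ normalFormMap) (g := (mk).toLinearMap) fun a b => by
      simp only [LinearMap.comp_apply, AlgHom.toLinearMap_apply,
        normalFormMap_X_zero_pow_mul_X_one_pow, mk_ofCoeffs_normalForm]) p

noncomputable def milnorRingEquiv [CharZero K] :
    (MvPolynomial (Fin 2) K ⧸ jacobianIdeal K) ≃ₗ[K] milnorExponents → K :=
  (jacobianIdeal K).quotientEquivOfNormalForm normalFormMap ofCoeffs
    (fun _ => normalFormMap_eq_zero_of_mem) normalFormMap_ofCoeffs mk_ofCoeffs_normalFormMap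

end Z18

theorem milnor_ring_Z18_dim :
    FiniteDimensional ℂ (MvPolynomial (Fin 2) ℂ ⧸
      Ideal.span ({(3 : MvPolynomial (Fin 2) ℂ) * X 0 ^ 2 * X 1 + X 1 ^ 6, X 0 ^ 3 + 6 * X 0 * X 1 ^ 5} : Set (MvPolynomial (Fin 2) ℂ))) ∧
    Module.finrank ℂ (MvPolynomial (Fin 2) ℂ ⧸
      Ideal.span ({(3 : MvPolynomial (Fin 2) ℂ) * X 0 ^ 2 * X 1 + X 1 ^ 6, X 0 ^ 3 + 6 * X 0 * X 1 ^ 5} : Set (MvPolynomial (Fin 2) ℂ))) = 18 := by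
  let e := Z18.milnorRingEquiv (K := ℂ)
  refine ⟨Module.Finite.equiv e.symm, e.finrank_eq.trans ?_⟩
  rw [Module.finrank_fintype_fun_eq_card, Fintype.card_coe]
  rfl
end

section
/- The quotient ring ℂ[X,Y]/(3X² + Y⁹, 9XY⁸) is a finite-dimensional ℂ-vector space of dimension 25. -/
/-!
Modulo `I = (a x² + y^(m+1), x y^m)` with `a ≠ 0` we have `x² ≡ -a⁻¹ y^(m+1)` and `x y^m ≡ 0`,
hence `y^(2m+1) ≡ 0`, so every monomial `x^i y^j` reduces to a scalar multiple of one of the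
`3m+1` monomials `y^j` (`j ≤ 2m`), `x y^j` (`j < m`), or to `0`. Extended linearly, this
reduction is a linear map that vanishes on `I` and agrees with the identity modulo `I`, so
`K[x,y] ⧸ I` is isomorphic to its range, which has those `3m+1` monomials as a basis.
For `a = 3`, `m = 8` the ideal is the Jacobian ideal of `x³ + x y⁹`, up to the unit `9`.
-/

open MvPolynomial

noncomputable def Ideal.quotientEquivRangeOfNormalForm {R A : Type*} [CommRing R] [CommRing A]
    [Algebra R A] (I : Ideal A) (ψ : A →ₗ[R] A) (hI : ∀ p ∈ I, ψ p = 0)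
    (hψ : ∀ p, p - ψ p ∈ I) : (A ⧸ I) ≃ₗ[R] LinearMap.range ψ :=
  have hker : LinearMap.ker ψ = I.restrictScalars R := by
    ext p
    refine ⟨fun hp => ?_, hI p⟩
    simpa [LinearMap.mem_ker.mp hp] using hψ p
  (Submodule.Quotient.restrictScalarsEquiv R I).symm ≪≫ₗ
    Submodule.quotEquivOfEq _ _ hker.symm ≪≫ₗ ψ.quotKerEquivRange

namespace MvPolynomial

variable {R : Type*} [CommSemiring R]

theorem mem_of_forall_X_pow_mul_X_pow_mem (S : Submodule R (MvPolynomial (Fin 2) R))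
    (h : ∀ i j, X 0 ^ i * X 1 ^ j ∈ S) (p : MvPolynomial (Fin 2) R) : p ∈ S := by
  induction p using MvPolynomial.induction_on' with
  | monomial d c =>
    rw [monomial_fin_two, mul_assoc, ← smul_eq_C_mul]
    exact S.smul_mem c (h _ _)
  | add p q hp hq => exact S.add_mem hp hq

theorem linearIndependent_X_pow_mul_X_pow :
    LinearIndependent R fun ij : ℕ × ℕ =>
      (X 0 ^ ij.1 * X 1 ^ ij.2 : MvPolynomial (Fin 2) R) := by
  have hinj : Function.Injective fun ij : ℕ × ℕ =>
      Finsupp.single (0 : Fin 2) ij.1 + Finsupp.single 1 ij.2 := fun ij kl h =>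
    Prod.ext (by simpa using DFunLike.congr_fun h 0) (by simpa using DFunLike.congr_fun h 1)
  convert (basisMonomials (Fin 2) R).linearIndependent.comp _ hinj with ij
  simp [coe_basisMonomials, X_pow_eq_monomial, monomial_mul]

end MvPolynomial

noncomputable section

namespace XCubePlusXYPow

variable {K : Type*} [Field K] (a : K) (m : ℕ)

def ideal : Ideal (MvPolynomial (Fin 2) K) :=
  Ideal.span {C a * X 0 ^ 2 + X 1 ^ (m + 1), X 0 * X 1 ^ m}

def normalForm : ℕ → ℕ → MvPolynomial (Fin 2) K
  | 0, j => if j < 2 * m + 1 then X 1 ^ j else 0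
  | 1, j => if j < m then X 0 * X 1 ^ j else 0
  | i + 2, j => -a⁻¹ • normalForm i (j + (m + 1))

def normalFormMap : MvPolynomial (Fin 2) K →ₗ[K] MvPolynomial (Fin 2) K :=
  (basisMonomials (Fin 2) K).constr K fun d => normalForm a m (d 0) (d 1)

def stdIndex : Fin (2 * m + 1) ⊕ Fin m → ℕ × ℕ :=
  Sum.elim (fun j => (0, j)) (fun j => (1, j))

variable (K) in
def stdMonomial (k : Fin (2 * m + 1) ⊕ Fin m) : MvPolynomial (Fin 2) K :=
  X 0 ^ (stdIndex m k).1 * X 1 ^ (stdIndex m k).2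

variable {a m}

theorem C_mul_X_zero_sq_add_mem_ideal : C a * X 0 ^ 2 + X 1 ^ (m + 1) ∈ ideal a m :=
  Ideal.subset_span (by simp)

theorem X_zero_mul_X_one_pow_mem_ideal : X 0 * X 1 ^ m ∈ ideal a m :=
  Ideal.subset_span (by simp)

theorem normalFormMap_X_pow_mul_X_pow (i j : ℕ) :
    normalFormMap a m (X 0 ^ i * X 1 ^ j) = normalForm a m i j := by
  have : (X 0 ^ i * X 1 ^ j : MvPolynomial (Fin 2) K) =
      basisMonomials (Fin 2) K (Finsupp.single 0 i + Finsupp.single 1 j) := by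
    simp [coe_basisMonomials, X_pow_eq_monomial, monomial_mul]
  rw [this, normalFormMap, Module.Basis.constr_basis]
  simp

theorem normalForm_succ_of_le : ∀ (i : ℕ) {j : ℕ}, m ≤ j → normalForm a m (i + 1) j = 0
  | 0, j, hj => by simp [normalForm, not_lt.mpr hj]
  | 1, j, hj => by simp [normalForm]; omega
  | i + 2, j, hj => by rw [normalForm, normalForm_succ_of_le i (by omega), smul_zero]

theorem normalFormMap_mul_eq_zero {q : MvPolynomial (Fin 2) K}
    (hq : ∀ i j, normalFormMap a m (X 0 ^ i * X 1 ^ j * q) = 0) (p : MvPolynomial (Fin 2) K) :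
    normalFormMap a m (p * q) = 0 :=
  mem_of_forall_X_pow_mul_X_pow_mem
    (LinearMap.ker (normalFormMap a m ∘ₗ LinearMap.mulRight K q)) hq p

theorem normalFormMap_eq_zero_of_mem (ha : a ≠ 0) {p : MvPolynomial (Fin 2) K}
    (hp : p ∈ ideal a m) : normalFormMap a m p = 0 := by
  obtain ⟨u, v, rfl⟩ := Ideal.mem_span_pair.mp hp
  have h₁ : ∀ i j,
      normalFormMap a m (X 0 ^ i * X 1 ^ j * (C a * X 0 ^ 2 + X 1 ^ (m + 1))) = 0 := by
    intro i j
    have : (X 0 ^ i * X 1 ^ j * (C a * X 0 ^ 2 + X 1 ^ (m + 1)) : MvPolynomial (Fin 2) K)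
        = a • (X 0 ^ (i + 2) * X 1 ^ j) + X 0 ^ i * X 1 ^ (j + (m + 1)) := by
      rw [smul_eq_C_mul]; ring
    rw [this, map_add, map_smul, normalFormMap_X_pow_mul_X_pow, normalFormMap_X_pow_mul_X_pow,
      normalForm, smul_smul, mul_neg, mul_inv_cancel₀ ha, neg_one_smul, neg_add_cancel]
  have h₂ : ∀ i j, normalFormMap a m (X 0 ^ i * X 1 ^ j * (X 0 * X 1 ^ m)) = 0 := by
    intro i j
    rw [show (X 0 ^ i * X 1 ^ j * (X 0 * X 1 ^ m) : MvPolynomial (Fin 2) K) =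
        X 0 ^ (i + 1) * X 1 ^ (j + m) by ring,
      normalFormMap_X_pow_mul_X_pow, normalForm_succ_of_le i (Nat.le_add_left m j)]
  rw [map_add, normalFormMap_mul_eq_zero h₁, normalFormMap_mul_eq_zero h₂, add_zero]

theorem X_one_pow_mem_ideal : (X 1 ^ (2 * m + 1) : MvPolynomial (Fin 2) K) ∈ ideal a m := by
  have h : (X 1 ^ (2 * m + 1) : MvPolynomial (Fin 2) K) =
      X 1 ^ m * (C a * X 0 ^ 2 + X 1 ^ (m + 1)) - C a * X 0 * (X 0 * X 1 ^ m) := by ring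
  rw [h]
  exact Ideal.sub_mem _ (Ideal.mul_mem_left _ _ C_mul_X_zero_sq_add_mem_ideal)
    (Ideal.mul_mem_left _ _ X_zero_mul_X_one_pow_mem_ideal)

theorem X_pow_mul_X_pow_sub_normalForm_mem (ha : a ≠ 0) :
    ∀ i j : ℕ, X 0 ^ i * X 1 ^ j - normalForm a m i j ∈ ideal a m
  | 0, j => by
    by_cases hj : j < 2 * m + 1
    · simp [normalForm, hj]
    · obtain ⟨k, rfl⟩ := Nat.exists_eq_add_of_le (not_lt.mp hj)
      rw [normalForm, if_neg hj, sub_zero, pow_zero, one_mul, pow_add]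
      exact Ideal.mul_mem_right _ _ X_one_pow_mem_ideal
  | 1, j => by
    by_cases hj : j < m
    · simp [normalForm, hj]
    · obtain ⟨k, rfl⟩ := Nat.exists_eq_add_of_le (not_lt.mp hj)
      rw [normalForm, if_neg hj, sub_zero, pow_one, pow_add, ← mul_assoc]
      exact Ideal.mul_mem_right _ _ X_zero_mul_X_one_pow_mem_ideal
  | i + 2, j => by
    have hC : C a⁻¹ * C a = (1 : MvPolynomial (Fin 2) K) := by
      rw [← C_mul, inv_mul_cancel₀ ha, C_1]
    have h : X 0 ^ (i + 2) * X 1 ^ j - normalForm a m (i + 2) j =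
        C a⁻¹ * (X 0 ^ i * X 1 ^ j * (C a * X 0 ^ 2 + X 1 ^ (m + 1)) -
          (X 0 ^ i * X 1 ^ (j + (m + 1)) - normalForm a m i (j + (m + 1)))) := by
      rw [normalForm, neg_smul, smul_eq_C_mul]
      linear_combination (-(X 0 ^ (i + 2) * X 1 ^ j)) * hC
    rw [h]
    exact Ideal.mul_mem_left _ _ (Ideal.sub_mem _
      (Ideal.mul_mem_left _ _ C_mul_X_zero_sq_add_mem_ideal)
      (X_pow_mul_X_pow_sub_normalForm_mem ha i (j + (m + 1))))

theorem sub_normalFormMap_mem (ha : a ≠ 0) (p : MvPolynomial (Fin 2) K) :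
    p - normalFormMap a m p ∈ ideal a m := by
  refine mem_of_forall_X_pow_mul_X_pow_mem
    ((ideal a m).restrictScalars K |>.comap (LinearMap.id - normalFormMap a m)) (fun i j => ?_) p
  simpa [normalFormMap_X_pow_mul_X_pow] using X_pow_mul_X_pow_sub_normalForm_mem ha i j

theorem normalForm_mem_span : ∀ i j : ℕ,
    normalForm a m i j ∈ Submodule.span K (Set.range (stdMonomial K m))
  | 0, j => by
    unfold normalForm
    split_ifs with hj
    · exact Submodule.subset_span ⟨.inl ⟨j, hj⟩, by simp [stdMonomial, stdIndex]⟩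
    · exact Submodule.zero_mem _
  | 1, j => by
    unfold normalForm
    split_ifs with hj
    · exact Submodule.subset_span ⟨.inr ⟨j, hj⟩, by simp [stdMonomial, stdIndex]⟩
    · exact Submodule.zero_mem _
  | i + 2, j => Submodule.smul_mem _ _ (normalForm_mem_span i (j + (m + 1)))

theorem normalFormMap_stdMonomial (k : Fin (2 * m + 1) ⊕ Fin m) :
    normalFormMap a m (stdMonomial K m k) = stdMonomial K m k := by
  rw [stdMonomial, normalFormMap_X_pow_mul_X_pow]
  rcases k with ⟨j, hj⟩ | ⟨j, hj⟩ <;> simp [stdIndex, normalForm, hj]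

theorem range_normalFormMap :
    LinearMap.range (normalFormMap a m) = Submodule.span K (Set.range (stdMonomial K m)) := by
  refine le_antisymm ?_ (Submodule.span_le.mpr ?_)
  · rintro _ ⟨p, rfl⟩
    refine mem_of_forall_X_pow_mul_X_pow_mem
      ((Submodule.span K (Set.range (stdMonomial K m))).comap (normalFormMap a m))
      (fun i j => ?_) p
    simpa [normalFormMap_X_pow_mul_X_pow] using normalForm_mem_span i j
  · rintro _ ⟨k, rfl⟩
    exact ⟨stdMonomial K m k, normalFormMap_stdMonomial k⟩

theorem linearIndependent_stdMonomial : LinearIndependent K (stdMonomial K m) := by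
  refine linearIndependent_X_pow_mul_X_pow.comp (stdIndex m) ?_
  rintro (j | j) (k | k) h <;> simp_all [stdIndex, Fin.ext_iff]

def quotientEquivSpanStdMonomial (ha : a ≠ 0) :
    (MvPolynomial (Fin 2) K ⧸ ideal a m) ≃ₗ[K]
      Submodule.span K (Set.range (stdMonomial K m)) :=
  (ideal a m).quotientEquivRangeOfNormalForm (normalFormMap a m)
      (fun _ => normalFormMap_eq_zero_of_mem ha) (sub_normalFormMap_mem ha) ≪≫ₗ
    LinearEquiv.ofEq _ _ range_normalFormMap

theorem finiteDimensional_quotient (ha : a ≠ 0) :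
    FiniteDimensional K (MvPolynomial (Fin 2) K ⧸ ideal a m) :=
  have := FiniteDimensional.span_of_finite K (Set.finite_range (stdMonomial K m))
  (quotientEquivSpanStdMonomial ha).symm.finiteDimensional

theorem finrank_quotient (ha : a ≠ 0) :
    Module.finrank K (MvPolynomial (Fin 2) K ⧸ ideal a m) = 3 * m + 1 := by
  rw [(quotientEquivSpanStdMonomial ha).finrank_eq,
    finrank_span_eq_card linearIndependent_stdMonomial, Fintype.card_sum, Fintype.card_fin,
    Fintype.card_fin]
  ring

end XCubePlusXYPow

end

theorem milnor_ring_Z19T_dim :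
    FiniteDimensional ℂ (MvPolynomial (Fin 2) ℂ ⧸
      Ideal.span ({(3 : MvPolynomial (Fin 2) ℂ) * X 0 ^ 2 + X 1 ^ 9, 9 * X 0 * X 1 ^ 8} : Set (MvPolynomial (Fin 2) ℂ))) ∧
    Module.finrank ℂ (MvPolynomial (Fin 2) ℂ ⧸
      Ideal.span ({(3 : MvPolynomial (Fin 2) ℂ) * X 0 ^ 2 + X 1 ^ 9, 9 * X 0 * X 1 ^ 8} : Set (MvPolynomial (Fin 2) ℂ))) = 25 := by
  have hunit : IsUnit (9 : MvPolynomial (Fin 2) ℂ) := by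
    rw [← map_ofNat C 9]
    exact (IsUnit.mk0 (9 : ℂ) (by norm_num)).map C
  have hI : Ideal.span ({(3 : MvPolynomial (Fin 2) ℂ) * X 0 ^ 2 + X 1 ^ 9, 9 * X 0 * X 1 ^ 8} :
      Set (MvPolynomial (Fin 2) ℂ)) = XCubePlusXYPow.ideal 3 8 := by
    rw [XCubePlusXYPow.ideal, Ideal.span_insert, Ideal.span_insert, mul_assoc,
      Ideal.span_singleton_mul_left_unit hunit, map_ofNat]
  rw [hI]
  exact ⟨XCubePlusXYPow.finiteDimensional_quotient three_ne_zero,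
    XCubePlusXYPow.finrank_quotient three_ne_zero⟩
end

section
/- The quotient ring ℂ[X,Y]/(4X³ + Y⁵, 5XY⁴) is a finite-dimensional ℂ-vector space of dimension 17. -/
/-!
Write `ℂ[x, y] = B[x]` with `B = ℂ[y]`. After rescaling the generators, the ideal is
`(x³ + a, x b)` with `a = y⁵ / 4` and `b = y⁴`. Since `x³ + a` is monic, `B[x] / (x³ + a)` is free
over `B` on `1, x, x²`, and multiplication by `x b` acts there by `(r₀, r₁, r₂) ↦ (-a b r₂, b r₀, b r₁)`.
Hence `B[x] / (x³ + a, x b) ≅ B / (a b) × B / (b) × B / (b)` as `B`-modules, of complex dimension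
`deg (a b) + 2 deg b = 9 + 4 + 4 = 17`.
-/

namespace Polynomial

section CubicQuotient

variable {R : Type*} [CommRing R] (a b : R)

theorem modByMonic_eq_C_add_C_mul_X_add_C_mul_X_sq {p q : R[X]} (hq : q.Monic)
    (hdeg : q.degree ≤ 3) :
    p %ₘ q = C ((p %ₘ q).coeff 0) + C ((p %ₘ q).coeff 1) * X + C ((p %ₘ q).coeff 2) * X ^ 2 := by
  rw [← sum_modByMonic_coeff (p := p) hq hdeg]
  simp [Fin.sum_univ_three, ← C_mul_X_pow_eq_monomial]

noncomputable def cubicRemainderClasses :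
    R[X] →ₗ[R] (R ⧸ Ideal.span {a * b}) × (R ⧸ Ideal.span {b}) × (R ⧸ Ideal.span {b}) :=
  let coeffClass (I : Ideal R) (i : ℕ) : R[X] →ₗ[R] R ⧸ I :=
    (Ideal.Quotient.mkₐ R I).toLinearMap ∘ₗ lcoeff R i ∘ₗ modByMonicHom (X ^ 3 + C a)
  (coeffClass _ 0).prod ((coeffClass _ 1).prod (coeffClass _ 2))

variable {a b} [Nontrivial R]

theorem cubicRemainderClasses_quadratic_add_mul (r₀ r₁ r₂ : R) (q : R[X]) :
    cubicRemainderClasses a b (C r₀ + C r₁ * X + C r₂ * X ^ 2 + (X ^ 3 + C a) * q) =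
      (Ideal.Quotient.mk _ r₀, Ideal.Quotient.mk _ r₁, Ideal.Quotient.mk _ r₂) := by
  have hdeg : (C r₀ + C r₁ * X + C r₂ * X ^ 2).degree < (X ^ 3 + C a).degree := by
    rw [degree_X_pow_add_C three_pos]
    compute_degree!
  have hrem := (div_modByMonic_unique q _ (monic_X_pow_add_C a three_ne_zero) ⟨rfl, hdeg⟩).2
  simp [cubicRemainderClasses, hrem, coeff_X, coeff_C]

theorem cubicRemainderClasses_surjective : Function.Surjective (cubicRemainderClasses a b) := by
  rintro ⟨u₀, u₁, u₂⟩
  obtain ⟨r₀, rfl⟩ := Ideal.Quotient.mk_surjective u₀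
  obtain ⟨r₁, rfl⟩ := Ideal.Quotient.mk_surjective u₁
  obtain ⟨r₂, rfl⟩ := Ideal.Quotient.mk_surjective u₂
  exact ⟨_, cubicRemainderClasses_quadratic_add_mul r₀ r₁ r₂ 0⟩

theorem cubicRemainderClasses_mul_self (q : R[X]) :
    cubicRemainderClasses a b ((X ^ 3 + C a) * q) = 0 := by
  simpa [Prod.mk_zero_zero] using cubicRemainderClasses_quadratic_add_mul (a := a) (b := b) 0 0 0 q

theorem cubicRemainderClasses_mul_X_mul_C (v : R[X]) :
    cubicRemainderClasses a b (v * (X * C b)) = 0 := by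
  set r := v %ₘ (X ^ 3 + C a)
  have hv := modByMonic_add_div v (X ^ 3 + C a)
  have hr := modByMonic_eq_C_add_C_mul_X_add_C_mul_X_sq (p := v)
    (monic_X_pow_add_C a three_ne_zero) (degree_X_pow_add_C three_pos a).le
  have hshift : v * (X * C b) =
      C (-(a * b * r.coeff 2)) + C (b * r.coeff 0) * X + C (b * r.coeff 1) * X ^ 2 +
        (X ^ 3 + C a) * (C (b * r.coeff 2) + X * C b * (v /ₘ (X ^ 3 + C a))) := by
    simp only [map_mul, map_neg] at hr ⊢
    linear_combination (X * C b) * (hr - hv)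
  rw [hshift, cubicRemainderClasses_quadratic_add_mul]
  simp only [Prod.mk_eq_zero, Ideal.Quotient.eq_zero_iff_dvd]
  exact ⟨⟨-r.coeff 2, by ring⟩, dvd_mul_right _ _, dvd_mul_right _ _⟩

theorem ker_cubicRemainderClasses :
    LinearMap.ker (cubicRemainderClasses a b) =
      (Ideal.span {X ^ 3 + C a, X * C b}).restrictScalars R := by
  ext p
  rw [LinearMap.mem_ker, Submodule.restrictScalars_mem]
  constructor
  · intro hp
    have hpr := modByMonic_add_div p (X ^ 3 + C a)
    have hr := modByMonic_eq_C_add_C_mul_X_add_C_mul_X_sq (p := p)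
      (monic_X_pow_add_C a three_ne_zero) (degree_X_pow_add_C three_pos a).le
    rw [← hpr, hr, cubicRemainderClasses_quadratic_add_mul] at hp
    simp only [Prod.mk_eq_zero, Ideal.Quotient.eq_zero_iff_dvd] at hp
    obtain ⟨⟨t, ht⟩, ⟨s, hs⟩, ⟨u, hu⟩⟩ := hp
    -- `C (a * b * t) = C (b * t) * (X ^ 3 + C a) - C t * X ^ 2 * (X * C b)`
    refine Ideal.mem_span_pair.mpr
      ⟨p /ₘ (X ^ 3 + C a) + C (b * t), C s + C u * X - C t * X ^ 2, ?_⟩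
    rw [ht, hs, hu] at hr
    simp only [map_mul] at hr ⊢
    linear_combination hpr - hr
  · intro hp
    obtain ⟨u, v, rfl⟩ := Ideal.mem_span_pair.mp hp
    rw [map_add, mul_comm u, cubicRemainderClasses_mul_self, cubicRemainderClasses_mul_X_mul_C,
      add_zero]

variable (a b) in
noncomputable def quotientSpanCubicEquiv :
    (R[X] ⧸ Ideal.span {X ^ 3 + C a, X * C b}) ≃ₗ[R]
      (R ⧸ Ideal.span {a * b}) × (R ⧸ Ideal.span {b}) × (R ⧸ Ideal.span {b}) :=
  (Submodule.Quotient.restrictScalarsEquiv R _).symm ≪≫ₗ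
    Submodule.quotEquivOfEq _ _ ker_cubicRemainderClasses.symm ≪≫ₗ
    (cubicRemainderClasses a b).quotKerEquivOfSurjective cubicRemainderClasses_surjective

end CubicQuotient

theorem finrank_quotient_span_X_pow_three_add_C_X_mul_C {K : Type*} [Field K] {a b : K[X]}
    (ha : a ≠ 0) (hb : b ≠ 0) :
    Module.finrank K (K[X][X] ⧸ Ideal.span {X ^ 3 + C a, X * C b}) =
      a.natDegree + 3 * b.natDegree := by
  have : Module.Finite K (K[X] ⧸ Ideal.span {a * b}) :=
    (AdjoinRoot.powerBasis (mul_ne_zero ha hb)).finite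
  have : Module.Finite K (K[X] ⧸ Ideal.span {b}) := (AdjoinRoot.powerBasis hb).finite
  rw [((quotientSpanCubicEquiv a b).restrictScalars K).finrank_eq,
    Module.finrank_prod, Module.finrank_prod, finrank_quotient_span_eq_natDegree,
    finrank_quotient_span_eq_natDegree, natDegree_mul ha hb]
  ring

end Polynomial

theorem Ideal.span_pair_mul_left_unit {A : Type*} [CommSemiring A] {u v : A} (hu : IsUnit u)
    (hv : IsUnit v) (x y : A) : Ideal.span {u * x, v * y} = Ideal.span {x, y} := by
  rw [Ideal.span_insert, Ideal.span_insert, Ideal.span_singleton_mul_left_unit hu,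
    Ideal.span_singleton_mul_left_unit hv]

namespace MvPolynomial

variable (R : Type*) [CommRing R]

noncomputable def finTwoAlgEquiv : MvPolynomial (Fin 2) R ≃ₐ[R] Polynomial (Polynomial R) :=
  (finSuccEquiv R 1).trans (Polynomial.mapAlgEquiv (uniqueAlgEquiv R (Fin 1)))

@[simp]
theorem finTwoAlgEquiv_X_zero : finTwoAlgEquiv R (X 0) = Polynomial.X := by
  simp [finTwoAlgEquiv, finSuccEquiv_X_zero]

@[simp]
theorem finTwoAlgEquiv_X_one : finTwoAlgEquiv R (X 1) = Polynomial.C Polynomial.X := by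
  rw [finTwoAlgEquiv, AlgEquiv.trans_apply, ← Fin.succ_zero_eq_one, finSuccEquiv_X_succ]
  simp

theorem map_finTwoAlgEquiv_span_W17_jacobian :
    (Ideal.span {4 * X 0 ^ 3 + X 1 ^ 5, 5 * X 0 * X 1 ^ 4} : Ideal (MvPolynomial (Fin 2) ℂ)).map
        (finTwoAlgEquiv ℂ) =
      Ideal.span {Polynomial.X ^ 3 + Polynomial.C (Polynomial.C 4⁻¹ * Polynomial.X ^ 5),
        Polynomial.X * Polynomial.C (Polynomial.X ^ 4)} := by
  have hunit (n : ℕ) [n.AtLeastTwo] : IsUnit (OfNat.ofNat n : Polynomial (Polynomial ℂ)) := by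
    have := (IsUnit.mk0 (OfNat.ofNat n : ℂ) (NeZero.ne _)).map (algebraMap ℂ (Polynomial (Polynomial ℂ)))
    rwa [map_ofNat] at this
  have h4inv : (4 : Polynomial (Polynomial ℂ)) * Polynomial.C (Polynomial.C 4⁻¹) = 1 := by
    simp [← Polynomial.C_mul, ← map_ofNat Polynomial.C]
  have h4 : finTwoAlgEquiv ℂ (4 * X 0 ^ 3 + X 1 ^ 5) =
      4 * (Polynomial.X ^ 3 + Polynomial.C (Polynomial.C 4⁻¹ * Polynomial.X ^ 5)) := by
    simp only [map_add, map_mul, map_pow, map_ofNat, finTwoAlgEquiv_X_zero, finTwoAlgEquiv_X_one]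
    linear_combination (-Polynomial.C Polynomial.X ^ 5) * h4inv
  have h5 : finTwoAlgEquiv ℂ (5 * X 0 * X 1 ^ 4) =
      5 * (Polynomial.X * Polynomial.C (Polynomial.X ^ 4)) := by
    simp only [map_mul, map_pow, map_ofNat, finTwoAlgEquiv_X_zero, finTwoAlgEquiv_X_one]
    ring
  rw [Ideal.map_span, Set.image_pair, h4, h5, Ideal.span_pair_mul_left_unit (hunit 4) (hunit 5)]

end MvPolynomial

open MvPolynomial

theorem milnor_ring_W17_dim :
    FiniteDimensional ℂ (MvPolynomial (Fin 2) ℂ ⧸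
      Ideal.span ({(4 : MvPolynomial (Fin 2) ℂ) * X 0 ^ 3 + X 1 ^ 5, 5 * X 0 * X 1 ^ 4} : Set (MvPolynomial (Fin 2) ℂ))) ∧
    Module.finrank ℂ (MvPolynomial (Fin 2) ℂ ⧸
      Ideal.span ({(4 : MvPolynomial (Fin 2) ℂ) * X 0 ^ 3 + X 1 ^ 5, 5 * X 0 * X 1 ^ 4} : Set (MvPolynomial (Fin 2) ℂ))) = 17 := by
  have hdim := (Ideal.quotientEquivAlg _ _ (finTwoAlgEquiv ℂ)
    map_finTwoAlgEquiv_span_W17_jacobian.symm).toLinearEquiv.finrank_eq.trans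
    (Polynomial.finrank_quotient_span_X_pow_three_add_C_X_mul_C (by simp) (by simp))
  simp only [Polynomial.natDegree_C_mul_X_pow 5 (4⁻¹ : ℂ) (by norm_num),
    Polynomial.natDegree_X_pow] at hdim
  exact ⟨Module.finite_of_finrank_pos (by omega), hdim⟩
end

section
/- The quotient ring ℂ[X,Y,Z]/(6X⁵Z, Z² + 2Y, X⁶ + 2YZ) is a finite-dimensional ℂ-vector space of dimension 21. -/
/-!
Because `Z² + 2Y` is a generator, `Y = -Z²/2` in the quotient, so the quotient is
`ℂ[X, Z]/(X⁵Z, X⁶ - Z³)`. There `X¹¹ = X⁵Z³ = 0`, so the 21 monomials `Xⁱ` (`i ≤ 10`) and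
`XⁱZ`, `XⁱZ²` (`i ≤ 4`) span: their span contains `1` and is stable under multiplication by
`X` and `Z`. For the lower bound, the quotient is `ℂ[X]/(X¹¹) ⊕ ℂ[X]/(X⁵) ⊕ ℂ[X]/(X⁵)` as a
`ℂ[X]`-module, with `Z` acting by `(a, b, c) ↦ (X⁶c, a, b)`. This operator satisfies `X⁵Z = 0`
and `Z³ = X⁶`, so the quotient acts on this 21-dimensional module, and the orbit of
`(1, 0, 0)` is the whole module.
-/

open Polynomial

abbrev TruncPolynomial (R : Type*) [CommRing R] (n : ℕ) : Type _ :=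
  R[X] ⧸ Ideal.span {(X ^ n : R[X])}

noncomputable section

namespace TruncPolynomial

variable {R : Type*} [CommRing R]

theorem mk_eq_zero_of_X_pow_dvd {n : ℕ} {p : R[X]} (h : X ^ n ∣ p) :
    (Ideal.Quotient.mk _ p : TruncPolynomial R n) = 0 :=
  Ideal.Quotient.eq_zero_iff_mem.2 (Ideal.mem_span_singleton.2 h)

@[simp]
theorem smul_mk {n : ℕ} (p q : R[X]) :
    p • (Ideal.Quotient.mk _ q : TruncPolynomial R n) = Ideal.Quotient.mk _ (p * q) := rfl

@[simp]
theorem smul_one_eq_mk {n : ℕ} (p : R[X]) :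
    p • (1 : TruncPolynomial R n) = Ideal.Quotient.mk _ p := by
  rw [← map_one (Ideal.Quotient.mk _), smul_mk, mul_one]

def truncate {m n : ℕ} (h : n ≤ m) : TruncPolynomial R m →ₗ[R[X]] TruncPolynomial R n :=
  (Ideal.Quotient.factorₐ R[X]
    (Ideal.span_singleton_le_span_singleton.2 (pow_dvd_pow X h))).toLinearMap

def mulXPow {m n : ℕ} (k : ℕ) (h : m ≤ n + k) :
    TruncPolynomial R n →ₗ[R[X]] TruncPolynomial R m :=
  Submodule.mapQ _ _ ((X ^ k : R[X]) • LinearMap.id) fun p hp => by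
    obtain ⟨q, rfl⟩ := Ideal.mem_span_singleton.1 hp
    refine Ideal.mem_span_singleton.2 ⟨X ^ (n + k - m) * q, ?_⟩
    simp only [LinearMap.smul_apply, LinearMap.id_coe, id_eq, smul_eq_mul]
    rw [← mul_assoc, ← pow_add, ← mul_assoc, ← pow_add]
    congr 2
    omega

@[simp]
theorem truncate_mk {m n : ℕ} (h : n ≤ m) (p : R[X]) :
    truncate h (Ideal.Quotient.mk _ p) = Ideal.Quotient.mk _ p := rfl

@[simp]
theorem mulXPow_mk {m n : ℕ} (k : ℕ) (h : m ≤ n + k) (p : R[X]) :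
    mulXPow k h (Ideal.Quotient.mk _ p) = Ideal.Quotient.mk _ (X ^ k * p) := rfl

instance (n : ℕ) : Module.Finite R (TruncPolynomial R n) :=
  .of_basis (AdjoinRoot.powerBasis' (monic_X_pow n)).basis

end TruncPolynomial

theorem finrank_truncPolynomial {K : Type*} [Field K] (n : ℕ) :
    Module.finrank K (TruncPolynomial K n) = n := by
  rw [finrank_quotient_span_eq_natDegree, natDegree_X_pow]

theorem algebraMap_inv_ofNat_mul_ofNat {K A : Type*} [Field K] [CharZero K] [Semiring A]
    [Algebra K A] (n : ℕ) [n.AtLeastTwo] :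
    algebraMap K A (OfNat.ofNat n)⁻¹ * OfNat.ofNat n = 1 := by
  rw [← map_ofNat (algebraMap K A), ← map_mul, inv_mul_cancel₀ (by norm_num), map_one]

theorem Submodule.eq_top_of_one_mem_of_mul_mem {R A : Type*} [CommSemiring R] [Semiring A]
    [Algebra R A] {s : Set A} (hs : Algebra.adjoin R s = ⊤) {M : Submodule R A} (h1 : 1 ∈ M)
    (hmul : ∀ a ∈ s, ∀ m ∈ M, a * m ∈ M) : M = ⊤ := by
  suffices h : ∀ a ∈ Algebra.adjoin R s, ∀ m ∈ M, a * m ∈ M from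
    eq_top_iff.2 fun a _ => mul_one a ▸ h a (hs ▸ Algebra.mem_top) 1 h1
  intro a ha
  induction ha using Algebra.adjoin_induction with
  | mem a ha => exact hmul a ha
  | algebraMap r => exact fun m hm => Algebra.smul_def r m ▸ M.smul_mem r hm
  | add a b _ _ iha ihb => exact fun m hm => add_mul a b m ▸ M.add_mem (iha m hm) (ihb m hm)
  | mul a b _ _ iha ihb => exact fun m hm => mul_assoc a b m ▸ iha _ (ihb m hm)

theorem MvPolynomial.adjoin_range_mk_X {σ R : Type*} [CommRing R]
    (I : Ideal (MvPolynomial σ R)) :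
    Algebra.adjoin R (Set.range fun i => Ideal.Quotient.mk I (X i)) = ⊤ := by
  rw [show (Set.range fun i => Ideal.Quotient.mk I (X i)) = Ideal.Quotient.mkₐ R I '' Set.range X
    from Set.range_comp _ _, Algebra.adjoin_image, MvPolynomial.adjoin_range_X, Algebra.map_top,
    AlgHom.range_eq_top]
  exact Ideal.Quotient.mkₐ_surjective R I

namespace S17T

open TruncPolynomial Submodule

abbrev jacobianIdeal : Ideal (MvPolynomial (Fin 3) ℂ) :=
  Ideal.span {(6 : MvPolynomial (Fin 3) ℂ) * .X 0 ^ 5 * .X 2, .X 2 ^ 2 + 2 * .X 1,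
    .X 0 ^ 6 + 2 * .X 1 * .X 2}

abbrev MilnorRing : Type := MvPolynomial (Fin 3) ℂ ⧸ jacobianIdeal

abbrev V : Type := TruncPolynomial ℂ 11 × TruncPolynomial ℂ 5 × TruncPolynomial ℂ 5

def T : Module.End ℂ[X] V :=
  (mulXPow 6 (by norm_num) ∘ₗ .snd _ _ _ ∘ₗ .snd _ _ _).prod
    ((truncate (by norm_num) ∘ₗ .fst _ _ _).prod (.fst _ _ _ ∘ₗ .snd _ _ _))

theorem T_apply (a : TruncPolynomial ℂ 11) (b c : TruncPolynomial ℂ 5) :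
    T (a, b, c) = (mulXPow 6 (by norm_num) c, truncate (by norm_num) a, b) := rfl

theorem X_pow_five_smul_T : (X ^ 5 : ℂ[X]) • T = 0 := by
  refine LinearMap.ext fun ⟨a, b, c⟩ => ?_
  obtain ⟨f, rfl⟩ := Ideal.Quotient.mk_surjective a
  obtain ⟨g, rfl⟩ := Ideal.Quotient.mk_surjective b
  obtain ⟨h, rfl⟩ := Ideal.Quotient.mk_surjective c
  simp only [LinearMap.smul_apply, T_apply, mulXPow_mk, truncate_mk, Prod.smul_mk, smul_mk,
    LinearMap.zero_apply, Prod.mk_eq_zero]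
  exact ⟨mk_eq_zero_of_X_pow_dvd ⟨h, by ring⟩, mk_eq_zero_of_X_pow_dvd (dvd_mul_right _ _),
    mk_eq_zero_of_X_pow_dvd (dvd_mul_right _ _)⟩

theorem T_pow_three : T ^ 3 = algebraMap ℂ[X] (Module.End ℂ[X] V) (X ^ 6) := by
  refine LinearMap.ext fun ⟨a, b, c⟩ => ?_
  obtain ⟨f, rfl⟩ := Ideal.Quotient.mk_surjective a
  obtain ⟨g, rfl⟩ := Ideal.Quotient.mk_surjective b
  obtain ⟨h, rfl⟩ := Ideal.Quotient.mk_surjective c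
  simp only [pow_succ, pow_zero, one_mul, Module.End.mul_apply, T_apply, mulXPow_mk, truncate_mk,
    Module.algebraMap_end_apply, Prod.smul_mk, smul_mk]

theorem finrank_V : Module.finrank ℂ V = 21 := by
  rw [Module.finrank_prod, Module.finrank_prod, finrank_truncPolynomial, finrank_truncPolynomial]

abbrev eliminatedIdeal : Ideal ℂ[X][X] := Ideal.span {C (X ^ 5) * X, C (X ^ 6) - X ^ 3}

def eliminateY : MvPolynomial (Fin 3) ℂ →ₐ[ℂ] ℂ[X][X] :=
  MvPolynomial.aeval (![C X, -C (C (2⁻¹ : ℂ)) * X ^ 2, X] : Fin 3 → ℂ[X][X])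

theorem map_eliminateY_jacobianIdeal_le : jacobianIdeal.map eliminateY ≤ eliminatedIdeal := by
  have h2 : (2 : ℂ[X][X]) * C (C (2⁻¹ : ℂ)) = 1 := by
    rw [← C_1, ← C_1, ← map_ofNat C 2, ← map_ofNat C 2, ← C_mul, ← C_mul]
    norm_num
  rw [Ideal.map_span, Ideal.span_le]
  rintro _ ⟨g, hg, rfl⟩
  simp only [Set.mem_insert_iff, Set.mem_singleton_iff] at hg
  rw [SetLike.mem_coe, Ideal.mem_span_pair]
  rcases hg with rfl | rfl | rfl <;>
    simp only [eliminateY, map_add, map_mul, map_pow, map_ofNat, MvPolynomial.aeval_X,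
      Matrix.cons_val_zero, Matrix.cons_val_one, Matrix.cons_val_two, Matrix.head_cons,
      Matrix.tail_cons]
  · exact ⟨6, 0, by ring⟩
  · exact ⟨0, 0, by linear_combination X ^ 2 * h2⟩
  · exact ⟨0, 1, by linear_combination X ^ 3 * h2⟩

theorem eliminatedIdeal_le_ker_aeval_T : eliminatedIdeal ≤ RingHom.ker (aeval T) := by
  rw [Ideal.span_le, Set.insert_subset_iff, Set.singleton_subset_iff]
  refine ⟨?_, by simp [T_pow_three]⟩
  simp only [SetLike.mem_coe, RingHom.mem_ker, map_mul, aeval_C, aeval_X]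
  rw [← Algebra.smul_def, X_pow_five_smul_T]

def ρ : MvPolynomial (Fin 3) ℂ →ₐ[ℂ] Module.End ℂ[X] V :=
  ((aeval T).restrictScalars ℂ).comp eliminateY

theorem jacobianIdeal_le_ker_ρ : jacobianIdeal ≤ RingHom.ker ρ := fun _ hg =>
  Ideal.map_le_iff_le_comap.1
    (map_eliminateY_jacobianIdeal_le.trans eliminatedIdeal_le_ker_aeval_T) hg

theorem ρ_X_two : ρ (.X 2) = T := by
  simp [ρ, eliminateY]

theorem ρ_aeval_X_zero (f : ℂ[X]) : ρ (aeval (.X 0) f) = algebraMap ℂ[X] _ f := by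
  rw [← aeval_algHom_apply, show ρ (.X 0) = algebraMap ℂ[X] _ X by simp [ρ, eliminateY],
    aeval_algebraMap_apply, aeval_X_left, AlgHom.id_apply]

def orbitMap : MilnorRing →ₗ[ℂ] V :=
  (LinearMap.applyₗ (R := ℂ[X]) ((1, 0, 0) : V)).restrictScalars ℂ ∘ₗ
    (Ideal.Quotient.liftₐ jacobianIdeal ρ fun _ hg => jacobianIdeal_le_ker_ρ hg).toLinearMap

theorem orbitMap_mk (p : MvPolynomial (Fin 3) ℂ) :
    orbitMap (Ideal.Quotient.mk _ p) = ρ p (1, 0, 0) := rfl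

theorem orbitMap_surjective : Function.Surjective orbitMap := by
  rintro ⟨a, b, c⟩
  obtain ⟨f, rfl⟩ := Ideal.Quotient.mk_surjective a
  obtain ⟨g, rfl⟩ := Ideal.Quotient.mk_surjective b
  obtain ⟨h, rfl⟩ := Ideal.Quotient.mk_surjective c
  refine ⟨Ideal.Quotient.mk _ (aeval (.X 0) f + .X 2 * aeval (.X 0) g +
    .X 2 ^ 2 * aeval (.X 0) h), ?_⟩
  rw [orbitMap_mk]
  simp only [map_add, map_mul, ρ_aeval_X_zero, ρ_X_two, LinearMap.add_apply,
    Module.End.mul_apply, pow_two, Module.algebraMap_end_apply, Prod.smul_mk, smul_zero,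
    smul_one_eq_mk, T_apply, map_zero, truncate_mk, Prod.mk_add_mk, add_zero, zero_add]

abbrev x : MilnorRing := Ideal.Quotient.mk _ (.X 0)
abbrev y : MilnorRing := Ideal.Quotient.mk _ (.X 1)
abbrev z : MilnorRing := Ideal.Quotient.mk _ (.X 2)

theorem generators_eq_zero : 6 * x ^ 5 * z = 0 ∧ z ^ 2 + 2 * y = 0 ∧ x ^ 6 + 2 * y * z = 0 := by
  simp only [← map_ofNat (Ideal.Quotient.mk jacobianIdeal), ← map_pow, ← map_mul, ← map_add,
    Ideal.Quotient.eq_zero_iff_mem]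
  exact ⟨Ideal.subset_span (by simp), Ideal.subset_span (by simp), Ideal.subset_span (by simp)⟩

theorem x_pow_five_mul_z : x ^ 5 * z = 0 := by
  linear_combination algebraMap ℂ MilnorRing 6⁻¹ * generators_eq_zero.1 -
    x ^ 5 * z * algebraMap_inv_ofNat_mul_ofNat (K := ℂ) (A := MilnorRing) 6

theorem y_eq_smul_z_sq : y = -(2⁻¹ : ℂ) • z ^ 2 := by
  rw [← algebraMap_smul MilnorRing, smul_eq_mul, map_neg]
  linear_combination algebraMap ℂ MilnorRing 2⁻¹ * generators_eq_zero.2.1 -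
    y * algebraMap_inv_ofNat_mul_ofNat (K := ℂ) (A := MilnorRing) 2

theorem x_pow_six : x ^ 6 = z ^ 3 := by
  linear_combination generators_eq_zero.2.2 - z * generators_eq_zero.2.1

theorem x_pow_eleven : x ^ 11 = 0 := by
  linear_combination x ^ 5 * x_pow_six + z ^ 2 * x_pow_five_mul_z

def monomialExponents : Finset (ℕ × ℕ) := Finset.range 11 ×ˢ {0} ∪ Finset.range 5 ×ˢ {1, 2}

def monomial (e : monomialExponents) : MilnorRing := x ^ e.1.1 * z ^ e.1.2

theorem lt_three_of_mem_monomialExponents {i k : ℕ} (he : (i, k) ∈ monomialExponents) :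
    k < 3 := by
  simp only [monomialExponents, Finset.mem_union, Finset.mem_product, Finset.mem_range,
    Finset.mem_singleton, Finset.mem_insert] at he
  omega

theorem x_pow_mul_z_pow_mem_span {i k : ℕ} (hk : k < 3) :
    x ^ i * z ^ k ∈ span ℂ (Set.range monomial) := by
  by_cases he : (i, k) ∈ monomialExponents
  · exact subset_span ⟨⟨(i, k), he⟩, rfl⟩
  suffices h : x ^ i * z ^ k = 0 from h ▸ zero_mem _
  have hik : (k = 0 ∧ 11 ≤ i) ∨ (1 ≤ k ∧ 5 ≤ i) := by
    simp only [monomialExponents, Finset.mem_union, Finset.mem_product, Finset.mem_range,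
      Finset.mem_singleton, Finset.mem_insert] at he
    omega
  rcases hik with ⟨rfl, hi⟩ | ⟨hk, hi⟩
  · obtain ⟨j, rfl⟩ := Nat.exists_eq_add_of_le hi
    linear_combination x ^ j * x_pow_eleven
  · obtain ⟨j, rfl⟩ := Nat.exists_eq_add_of_le hi
    obtain ⟨l, rfl⟩ := Nat.exists_eq_add_of_le hk
    linear_combination x ^ j * z ^ l * x_pow_five_mul_z

theorem mul_mem_span_monomial {a : MilnorRing}
    (ha : ∀ i k, k < 3 → a * (x ^ i * z ^ k) ∈ span ℂ (Set.range monomial)) {m : MilnorRing}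
    (hm : m ∈ span ℂ (Set.range monomial)) : a * m ∈ span ℂ (Set.range monomial) := by
  refine (span_le (p := (span ℂ _).comap (LinearMap.mulLeft ℂ a))).2 ?_ hm
  rintro _ ⟨⟨⟨i, k⟩, he⟩, rfl⟩
  exact ha i k (lt_three_of_mem_monomialExponents he)

theorem span_monomial_eq_top : span ℂ (Set.range monomial) = ⊤ := by
  have hx : ∀ m ∈ span ℂ (Set.range monomial), x * m ∈ span ℂ (Set.range monomial) :=
    fun m => mul_mem_span_monomial fun i k hk => by
      rw [← mul_assoc, ← pow_succ']
      exact x_pow_mul_z_pow_mem_span hk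
  have hz : ∀ m ∈ span ℂ (Set.range monomial), z * m ∈ span ℂ (Set.range monomial) :=
    fun m => mul_mem_span_monomial fun i k hk => by
      rcases lt_or_eq_of_le (Nat.lt_succ_iff.1 hk) with hk | rfl
      · rw [mul_left_comm, ← pow_succ']
        exact x_pow_mul_z_pow_mem_span (by omega)
      · rw [mul_left_comm, ← pow_succ', ← x_pow_six, ← pow_add]
        simpa using x_pow_mul_z_pow_mem_span (i := i + 6) (k := 0) (by norm_num)
  refine eq_top_of_one_mem_of_mul_mem (MvPolynomial.adjoin_range_mk_X _)
    (by simpa using x_pow_mul_z_pow_mem_span (i := 0) (k := 0) (by norm_num)) ?_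
  rintro _ ⟨i, rfl⟩
  fin_cases i
  · exact hx
  · intro m hm
    show y * m ∈ _
    rw [y_eq_smul_z_sq, smul_mul_assoc, pow_two, mul_assoc]
    exact smul_mem _ _ (hz _ (hz m hm))
  · exact hz

end S17T

end

open MvPolynomial

theorem milnor_ring_S17T_dim :
    FiniteDimensional ℂ (MvPolynomial (Fin 3) ℂ ⧸
      Ideal.span ({(6 : MvPolynomial (Fin 3) ℂ) * X 0 ^ 5 * X 2, X 2 ^ 2 + 2 * X 1, X 0 ^ 6 + 2 * X 1 * X 2} : Set (MvPolynomial (Fin 3) ℂ))) ∧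
    Module.finrank ℂ (MvPolynomial (Fin 3) ℂ ⧸
      Ideal.span ({(6 : MvPolynomial (Fin 3) ℂ) * X 0 ^ 5 * X 2, X 2 ^ 2 + 2 * X 1, X 0 ^ 6 + 2 * X 1 * X 2} : Set (MvPolynomial (Fin 3) ℂ))) = 21 := by
  have : FiniteDimensional ℂ S17T.MilnorRing :=
    ⟨Submodule.fg_def.2 ⟨_, Set.finite_range _, S17T.span_monomial_eq_top⟩⟩
  refine ⟨this, le_antisymm ?_ ?_⟩
  · calc Module.finrank ℂ S17T.MilnorRing
        = Module.finrank ℂ (Submodule.span ℂ (Set.range S17T.monomial)) := by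
          rw [S17T.span_monomial_eq_top, finrank_top]
      _ ≤ Fintype.card S17T.monomialExponents := finrank_range_le_card _
      _ = 21 := rfl
  · calc 21 = Module.finrank ℂ S17T.V := S17T.finrank_V.symm
      _ ≤ Module.finrank ℂ S17T.MilnorRing :=
        LinearMap.finrank_le_finrank_of_surjective S17T.orbitMap_surjective
end

section
/- For every a ∈ ℂ with a² ≠ 4, the quotient ring ℂ[x,y]/(4x³ + 2axy³, 3ax²y² + 6y⁵) is a finite-dimensional ℂ-vector space of dimension 15. -/
/-!
The fifteen monomials `x^i y^j` with `i < 3`, `j < 5` form a basis of the Milnor ring.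
Modulo the Jacobian ideal, `x³ = -(a/2) x y³` and `y⁵ = -(a/2) x² y²`; substituting one into the
other gives `((a/2)² - 1) x y⁵ = 0`, so `x y⁵ = 0` when `a² ≠ 4`, and these three rules reduce
every monomial into the box. Conversely, the coefficients of `A ∂ₓW + B ∂ᵧW` just outside the box
kill every coefficient of `A` and `B` that could contribute inside it, so no nonzero polynomial
supported in the box lies in the Jacobian ideal.
-/

open MvPolynomial

namespace MvPolynomial

variable {σ K : Type*} [Field K] (I : Ideal (MvPolynomial σ K)) (s : Set (σ →₀ ℕ))

theorem finrank_quotient_eq_card_of_restrictSupport (hs : s.Finite)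
    (hdisj : ∀ p ∈ restrictSupport K s, p ∈ I → p = 0)
    (hspan : ∀ m, Ideal.Quotient.mk I (monomial m 1) ∈
      Submodule.span K ((fun m ↦ Ideal.Quotient.mk I (monomial m 1)) '' s)) :
    FiniteDimensional K (MvPolynomial σ K ⧸ I) ∧
      Module.finrank K (MvPolynomial σ K ⧸ I) = Nat.card s := by
  let φ := (Ideal.Quotient.mkₐ K I).toLinearMap ∘ₗ (restrictSupport K s).subtype
  have hinj : Function.Injective φ := by
    rw [← LinearMap.ker_eq_bot, Submodule.eq_bot_iff]
    rintro ⟨p, hp⟩ hker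
    exact Subtype.ext (hdisj p hp (Ideal.Quotient.eq_zero_iff_mem.mp hker))
  have hsurj : Function.Surjective φ := by
    rw [← LinearMap.range_eq_top, LinearMap.range_comp, Submodule.range_subtype,
      restrictSupport_eq_span, Submodule.map_span, ← Set.image_comp, eq_top_iff]
    rintro q -
    obtain ⟨p, rfl⟩ := Ideal.Quotient.mk_surjective q
    induction p using MvPolynomial.induction_on' with
    | monomial m c =>
      have hc : Ideal.Quotient.mk I (monomial m c) =
          c • Ideal.Quotient.mk I (monomial m 1) := by
        rw [← Ideal.Quotient.mkₐ_eq_mk K, ← map_smul, smul_monomial, smul_eq_mul, mul_one]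
      rw [hc]
      exact Submodule.smul_mem _ _ (hspan m)
    | add p q hp hq => rw [map_add]; exact Submodule.add_mem _ hp hq
  let e := LinearEquiv.ofBijective φ ⟨hinj, hsurj⟩
  have := hs.to_subtype
  have : FiniteDimensional K (restrictSupport K s) :=
    (basisRestrictSupport K s).finiteDimensional_of_finite
  refine ⟨e.finiteDimensional, ?_⟩
  rw [← e.finrank_eq, Module.finrank_eq_nat_card_basis (basisRestrictSupport K s)]

end MvPolynomial

section
variable {K R : Type*} [Field K] [CommRing R] [Algebra K R]

lemma eq_neg_algebraMap_div_mul_of_add_eq_zero {c d : K} (hc : c ≠ 0) {u v : R}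
    (h : algebraMap K R c * u + algebraMap K R d * v = 0) :
    u = -algebraMap K R (d / c) * v := by
  have hsmul : c • (u + algebraMap K R (d / c) * v) = 0 := by
    rw [Algebra.smul_def, mul_add, ← mul_assoc, ← map_mul, mul_div_cancel₀ _ hc, h]
  linear_combination (smul_eq_zero.mp hsmul).resolve_left hc

variable (K) in
def boxSpan (x y : R) : Submodule K R :=
  Submodule.span K {z | ∃ i < 3, ∃ j < 5, x ^ i * y ^ j = z}

variable {x y : R} {b : K}

lemma pow_mul_pow_mem_boxSpan_of_lt {i j : ℕ} (hi : i < 3) (hj : j < 5) :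
    x ^ i * y ^ j ∈ boxSpan K x y :=
  Submodule.subset_span ⟨i, hi, j, hj, rfl⟩

lemma mul_pow_five_eq_zero (hx : x ^ 3 = -algebraMap K R b * x * y ^ 3)
    (hy : y ^ 5 = -algebraMap K R b * x ^ 2 * y ^ 2) (hb : b ^ 2 ≠ 1) : x * y ^ 5 = 0 := by
  have h : (b ^ 2 - 1) • (x * y ^ 5) = 0 := by
    rw [Algebra.smul_def, map_sub, map_pow, map_one]
    linear_combination (-x) * hy + (algebraMap K R b * y ^ 2) * hx
  exact (smul_eq_zero.mp h).resolve_left (sub_ne_zero.mpr hb)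

lemma pow_mul_pow_mem_boxSpan_of_pos (hx : x ^ 3 = -algebraMap K R b * x * y ^ 3)
    (hxy : x * y ^ 5 = 0) {i : ℕ} (hi : 0 < i) (j : ℕ) : x ^ i * y ^ j ∈ boxSpan K x y := by
  induction i using Nat.strong_induction_on generalizing j with
  | _ i ih =>
    obtain h3 | h3 := lt_or_ge i 3
    · obtain hj | hj := lt_or_ge j 5
      · exact pow_mul_pow_mem_boxSpan_of_lt h3 hj
      · obtain ⟨k, rfl⟩ : ∃ k, i = k + 1 := ⟨i - 1, by omega⟩
        obtain ⟨l, rfl⟩ : ∃ l, j = l + 5 := ⟨j - 5, by omega⟩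
        have : x ^ (k + 1) * y ^ (l + 5) = 0 := by linear_combination x ^ k * y ^ l * hxy
        rw [this]
        exact Submodule.zero_mem _
    · obtain ⟨k, rfl⟩ : ∃ k, i = k + 3 := ⟨i - 3, by omega⟩
      have : x ^ (k + 3) * y ^ j = -algebraMap K R b * (x ^ (k + 1) * y ^ (j + 3)) := by
        linear_combination x ^ k * y ^ j * hx
      rw [this, ← map_neg, ← Algebra.smul_def]
      exact Submodule.smul_mem _ _ (ih (k + 1) (by omega) (by omega) (j + 3))

lemma pow_mul_pow_mem_boxSpan (hx : x ^ 3 = -algebraMap K R b * x * y ^ 3)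
    (hy : y ^ 5 = -algebraMap K R b * x ^ 2 * y ^ 2) (hb : b ^ 2 ≠ 1) (i j : ℕ) :
    x ^ i * y ^ j ∈ boxSpan K x y := by
  have hxy := mul_pow_five_eq_zero hx hy hb
  rcases Nat.eq_zero_or_pos i with rfl | hi
  · obtain hj | hj := lt_or_ge j 5
    · exact pow_mul_pow_mem_boxSpan_of_lt (by norm_num) hj
    · obtain ⟨l, rfl⟩ : ∃ l, j = l + 5 := ⟨j - 5, by omega⟩
      have : x ^ 0 * y ^ (l + 5) = -algebraMap K R b * (x ^ 2 * y ^ (l + 2)) := by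
        linear_combination y ^ l * hy
      rw [this, ← map_neg, ← Algebra.smul_def]
      exact Submodule.smul_mem _ _ (pow_mul_pow_mem_boxSpan_of_pos hx hxy two_pos _)
  · exact pow_mul_pow_mem_boxSpan_of_pos hx hxy hi j
end

noncomputable section
namespace W10

def pairExp (u v : ℕ) : Fin 2 →₀ ℕ := Finsupp.single 0 u + Finsupp.single 1 v

@[simp] lemma pairExp_apply_zero (u v : ℕ) : pairExp u v 0 = u := by simp [pairExp]
@[simp] lemma pairExp_apply_one (u v : ℕ) : pairExp u v 1 = v := by simp [pairExp]

lemma pairExp_eta (m : Fin 2 →₀ ℕ) : pairExp (m 0) (m 1) = m := by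
  ext i; fin_cases i <;> simp

lemma pairExp_le_pairExp {s t u v : ℕ} : pairExp s t ≤ pairExp u v ↔ s ≤ u ∧ t ≤ v := by
  simp [Finsupp.le_def, Fin.forall_fin_two]

lemma pairExp_sub_pairExp (s t u v : ℕ) :
    pairExp u v - pairExp s t = pairExp (u - s) (v - t) := by
  ext i; fin_cases i <;> simp

lemma monomial_pairExp (u v : ℕ) (c : ℂ) :
    monomial (pairExp u v) c = C c * X 0 ^ u * X 1 ^ v := by
  rw [mul_assoc, X_pow_eq_monomial, X_pow_eq_monomial, monomial_mul, C_mul_monomial,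
    mul_one, mul_one]
  rfl

lemma coeff_pairExp_mul_monomial (p : MvPolynomial (Fin 2) ℂ) (u v s t : ℕ) (c : ℂ) :
    coeff (pairExp u v) (p * monomial (pairExp s t) c) =
      if s ≤ u ∧ t ≤ v then coeff (pairExp (u - s) (v - t)) p * c else 0 := by
  simp only [coeff_mul_monomial', pairExp_le_pairExp, pairExp_sub_pairExp]

def box : Set (Fin 2 →₀ ℕ) := Set.Iic (pairExp 2 4)

lemma card_box : Nat.card box = 15 := by
  rw [box, ← Finset.coe_Iic, Nat.card_coe_set_eq, Set.ncard_coe_finset, Finsupp.card_Iic,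
    Finset.prod_subset (Finset.subset_univ _) (by simp_all), Fin.prod_univ_two]
  simp

lemma pairExp_mem_box {u v : ℕ} : pairExp u v ∈ box ↔ u ≤ 2 ∧ v ≤ 4 := pairExp_le_pairExp

def partialX (a : ℂ) : MvPolynomial (Fin 2) ℂ := 4 * X 0 ^ 3 + 2 * C a * X 0 * X 1 ^ 3

def partialY (a : ℂ) : MvPolynomial (Fin 2) ℂ := 3 * C a * X 0 ^ 2 * X 1 ^ 2 + 6 * X 1 ^ 5

def jacobianIdeal (a : ℂ) : Ideal (MvPolynomial (Fin 2) ℂ) :=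
  Ideal.span {partialX a, partialY a}

lemma partialX_eq (a : ℂ) :
    partialX a = monomial (pairExp 3 0) 4 + monomial (pairExp 1 3) (2 * a) := by
  simp only [partialX, monomial_pairExp, map_mul, map_ofNat]; ring

lemma partialY_eq (a : ℂ) :
    partialY a = monomial (pairExp 2 2) (3 * a) + monomial (pairExp 0 5) 6 := by
  simp only [partialY, monomial_pairExp, map_mul, map_ofNat]; ring

lemma eq_zero_of_mem_restrictSupport_box {a : ℂ} {p : MvPolynomial (Fin 2) ℂ}
    (hbox : p ∈ restrictSupport ℂ box) (hJ : p ∈ jacobianIdeal a) : p = 0 := by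
  obtain ⟨A, B, rfl⟩ := Ideal.mem_span_pair.mp hJ
  have coeff_eq (u v : ℕ) : coeff (pairExp u v) (A * partialX a + B * partialY a) =
      (if 3 ≤ u ∧ 0 ≤ v then coeff (pairExp (u - 3) (v - 0)) A * 4 else 0) +
      (if 1 ≤ u ∧ 3 ≤ v then coeff (pairExp (u - 1) (v - 3)) A * (2 * a) else 0) +
      ((if 2 ≤ u ∧ 2 ≤ v then coeff (pairExp (u - 2) (v - 2)) B * (3 * a) else 0) +
      (if 0 ≤ u ∧ 5 ≤ v then coeff (pairExp (u - 0) (v - 5)) B * 6 else 0)) := by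
    simp only [partialX_eq, partialY_eq, mul_add, coeff_add, coeff_pairExp_mul_monomial]
  have outside {u v : ℕ} (h : ¬ (u ≤ 2 ∧ v ≤ 4)) :
      coeff (pairExp u v) (A * partialX a + B * partialY a) = 0 :=
    notMem_support_iff.mp fun hm => h (pairExp_mem_box.mp (hbox hm))
  -- The exponents (3,0), (3,1), (4,0), (4,1), (0,5), (0,6), (0,7) lie outside the box.
  have vanish {u v : ℕ} (h : ¬ (u ≤ 2 ∧ v ≤ 4)) := (coeff_eq u v).symm.trans (outside h)
  have hA00 : coeff (pairExp 0 0) A = 0 := by simpa using vanish (u := 3) (v := 0) (by norm_num)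
  have hA01 : coeff (pairExp 0 1) A = 0 := by simpa using vanish (u := 3) (v := 1) (by norm_num)
  have hA10 : coeff (pairExp 1 0) A = 0 := by simpa using vanish (u := 4) (v := 0) (by norm_num)
  have hA11 : coeff (pairExp 1 1) A = 0 := by simpa using vanish (u := 4) (v := 1) (by norm_num)
  have hB00 : coeff (pairExp 0 0) B = 0 := by simpa using vanish (u := 0) (v := 5) (by norm_num)
  have hB01 : coeff (pairExp 0 1) B = 0 := by simpa using vanish (u := 0) (v := 6) (by norm_num)
  have hB02 : coeff (pairExp 0 2) B = 0 := by simpa using vanish (u := 0) (v := 7) (by norm_num)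
  ext m
  rw [← pairExp_eta m, coeff_zero]
  by_cases h : m 0 ≤ 2 ∧ m 1 ≤ 4
  · obtain ⟨hu, hv⟩ := h
    rw [coeff_eq]
    interval_cases m 0 <;> interval_cases m 1 <;>
      simp [hA00, hA01, hA10, hA11, hB00, hB01, hB02]
  · exact outside h

variable (a : ℂ)
local notation "𝐱" => Ideal.Quotient.mk (jacobianIdeal a) (X 0)
local notation "𝐲" => Ideal.Quotient.mk (jacobianIdeal a) (X 1)

lemma mk_X_zero_pow_three : 𝐱 ^ 3 = -algebraMap ℂ _ (a / 2) * 𝐱 * 𝐲 ^ 3 := by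
  have h : Ideal.Quotient.mk (jacobianIdeal a) (partialX a) = 0 :=
    Ideal.Quotient.eq_zero_iff_mem.mpr (Ideal.subset_span (by simp))
  have h' : algebraMap ℂ _ 4 * 𝐱 ^ 3 + algebraMap ℂ _ (2 * a) * (𝐱 * 𝐲 ^ 3) = 0 := by
    rw [← h, partialX]
    simp only [map_add, map_mul, map_pow, map_ofNat, ← MvPolynomial.algebraMap_eq,
      Ideal.Quotient.mk_algebraMap]
    ring
  rw [mul_assoc, eq_neg_algebraMap_div_mul_of_add_eq_zero (by norm_num) h']
  ring_nf

lemma mk_X_one_pow_five : 𝐲 ^ 5 = -algebraMap ℂ _ (a / 2) * 𝐱 ^ 2 * 𝐲 ^ 2 := by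
  have h : Ideal.Quotient.mk (jacobianIdeal a) (partialY a) = 0 :=
    Ideal.Quotient.eq_zero_iff_mem.mpr (Ideal.subset_span (by simp))
  have h' : algebraMap ℂ _ 6 * 𝐲 ^ 5 + algebraMap ℂ _ (3 * a) * (𝐱 ^ 2 * 𝐲 ^ 2) = 0 := by
    rw [← h, partialY]
    simp only [map_add, map_mul, map_pow, map_ofNat, ← MvPolynomial.algebraMap_eq,
      Ideal.Quotient.mk_algebraMap]
    ring
  rw [mul_assoc, eq_neg_algebraMap_div_mul_of_add_eq_zero (by norm_num) h']
  ring_nf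

lemma boxSpan_le_span_monomials :
    boxSpan ℂ 𝐱 𝐲 ≤ Submodule.span ℂ
      ((fun m ↦ Ideal.Quotient.mk (jacobianIdeal a) (monomial m 1)) '' box) := by
  refine Submodule.span_le.mpr ?_
  rintro _ ⟨i, hi, j, hj, rfl⟩
  refine Submodule.subset_span ⟨pairExp i j, pairExp_mem_box.mpr ⟨by omega, by omega⟩, ?_⟩
  simp [monomial_pairExp]

end W10
end

/-- For every `a` with `a² ≠ 4`, the Milnor ring
`ℂ[x,y]/(4x³ + 2axy³, 3ax²y² + 6y⁵)` of `W₁,₀ = x⁴ + ax²y³ + y⁶` has dimension 15. -/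
theorem milnor_ring_W10_dim (a : ℂ) (ha : a ^ 2 ≠ 4) :
    FiniteDimensional ℂ (MvPolynomial (Fin 2) ℂ ⧸
      Ideal.span ({(4 : MvPolynomial (Fin 2) ℂ) * X 0 ^ 3 + 2 * C a * X 0 * X 1 ^ 3,
        3 * C a * X 0 ^ 2 * X 1 ^ 2 + 6 * X 1 ^ 5} : Set (MvPolynomial (Fin 2) ℂ))) ∧
    Module.finrank ℂ (MvPolynomial (Fin 2) ℂ ⧸
      Ideal.span ({(4 : MvPolynomial (Fin 2) ℂ) * X 0 ^ 3 + 2 * C a * X 0 * X 1 ^ 3,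
        3 * C a * X 0 ^ 2 * X 1 ^ 2 + 6 * X 1 ^ 5} : Set (MvPolynomial (Fin 2) ℂ))) = 15 := by
  have hb : (a / 2) ^ 2 ≠ 1 := by
    contrapose! ha
    linear_combination 4 * ha
  have hspan (m : Fin 2 →₀ ℕ) :
      Ideal.Quotient.mk (W10.jacobianIdeal a) (monomial m 1) ∈
        Submodule.span ℂ ((fun m ↦ Ideal.Quotient.mk _ (monomial m 1)) '' W10.box) := by
    rw [← W10.pairExp_eta m, W10.monomial_pairExp, map_one, one_mul, map_mul, map_pow, map_pow]
    exact W10.boxSpan_le_span_monomials a (pow_mul_pow_mem_boxSpan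
      (W10.mk_X_zero_pow_three a) (W10.mk_X_one_pow_five a) hb _ _)
  rw [← W10.card_box]
  exact finrank_quotient_eq_card_of_restrictSupport (W10.jacobianIdeal a) W10.box
    (Set.finite_Iic _) (fun _ hp hJ ↦ W10.eq_zero_of_mem_restrictSupport_box hp hJ) hspan
end
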